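/- (Bressoud.) For integers k ≥ a ≥ 1, as an identity of formal power series in q: Σ_{n=0}^∞ E_{k,a}(n) q^n = Σ_{N₁ ≥ N₂ ≥ ⋯ ≥ N_{k−1} ≥ 0} q^{N₁²+N₂²+⋯+N_{k−1}²+N_a+N_{a+1}+⋯+N_{k−1}} / ((q)_{N₁−N₂} ⋯ (q)_{N_{k−2}−N_{k−1}} (q)_{N_{k−1}}). -/

import Mathlib

open Finset PowerSeries

noncomputable section

/-! ### q-series as formal power series in `q = X` -/

/-- The finite q-Pochhammer symbol `(q^c; q^d)_n = ∏_{i=0}^{n-1} (1 - q^{c+di})`,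
as a formal power series in `q = X`. -/
def pochFin (c d n : ℕ) : PowerSeries ℚ :=
  ∏ i ∈ Finset.range n, (1 - (PowerSeries.X : PowerSeries ℚ) ^ (c + d * i))

/-- The infinite product `∏_{i=0}^∞ f i`, defined coefficientwise.  For every product
appearing below the `i`-th factor differs from `1` only in degrees `≥ i+1` (for `i ≥ 1`),
so the `n`-th coefficient of the infinite product is exactly the `n`-th coefficient of
the partial product `∏_{i ≤ n} f i`. -/
def prodInf (f : ℕ → PowerSeries ℚ) : PowerSeries ℚ :=
  PowerSeries.mk fun n => PowerSeries.coeff n (∏ i ∈ Finset.range (n + 1), f i)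

/-- The infinite q-Pochhammer symbol `(q^c; q^d)_∞ = ∏_{i=0}^∞ (1 - q^{c+di})`. -/
def pochInf (c d : ℕ) : PowerSeries ℚ :=
  prodInf fun i => 1 - (PowerSeries.X : PowerSeries ℚ) ^ (c + d * i)

/-- The infinite q-Pochhammer symbol `(-q^c; q^d)_∞ = ∏_{i=0}^∞ (1 + q^{c+di})`. -/
def pochInfNeg (c d : ℕ) : PowerSeries ℚ :=
  prodInf fun i => 1 + (PowerSeries.X : PowerSeries ℚ) ^ (c + d * i)

/-- The sum `Σ_{N₁ ≥ N₂ ≥ ⋯ ≥ N_k ≥ 0} T(N)`, defined coefficientwise.  Every term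
`T N` appearing below has order `≥ N₁² ≥ N₁`, so only the finitely many antitone `N`
with all entries `≤ n` can contribute to the `n`-th coefficient. -/
def antitoneSum (k : ℕ) (T : (Fin k → ℕ) → PowerSeries ℚ) : PowerSeries ℚ :=
  PowerSeries.mk fun n =>
    ∑ N ∈ (Fintype.piFinset fun _ : Fin k => Finset.range (n + 1)).filter
        (fun N => ∀ i j : Fin k, i ≤ j → N j ≤ N i),
      PowerSeries.coeff n (T N)

/-- `Np k N j` is the paper's `N_j` (1-based indexing, `N : Fin k → ℕ` listing
`N₁, …, N_k`), extended by `N_j = 0` for `j > k` (and with the convention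
`N_0 = N_1`). -/
def Np (k : ℕ) (N : Fin k → ℕ) (j : ℕ) : ℕ :=
  if h : j - 1 < k then N ⟨j - 1, h⟩ else 0

/-! ### Partition counting functions -/

/-- The Rogers–Ramanujan–Gordon condition for `B_{k,a}`: at most `a-1` parts equal
to `1`, and among any two consecutive values at most `k-1` parts (equivalently,
`λ_j - λ_{j+k-1} ≥ 2` for all `j`). -/
def IsGordon (k a : ℕ) {n : ℕ} (p : n.Partition) : Prop :=
  p.parts.count 1 ≤ a - 1 ∧
  ∀ l : ℕ, 1 ≤ l → p.parts.count l + p.parts.count (l + 1) ≤ k - 1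

/-- `B_{k,a}(n)`. -/
def countB (k a n : ℕ) : ℕ := Set.ncard {p : n.Partition | IsGordon k a p}

/-- `A_{k,a}(n)`: partitions of `n` with no part `≡ 0, ±a (mod 2k+1)`. -/
def countA (k a n : ℕ) : ℕ :=
  Set.ncard {p : n.Partition | ∀ j ∈ p.parts,
    (j : ZMod (2 * k + 1)) ≠ 0 ∧ (j : ZMod (2 * k + 1)) ≠ (a : ZMod (2 * k + 1)) ∧
      (j : ZMod (2 * k + 1)) ≠ -(a : ZMod (2 * k + 1))}

/-- Bressoud's condition for `B̃_{k,a}`. -/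
def IsBressoud (k a : ℕ) {n : ℕ} (p : n.Partition) : Prop :=
  p.parts.count 1 ≤ a - 1 ∧
  (∀ l : ℕ, 1 ≤ l → p.parts.count l + p.parts.count (l + 1) ≤ k - 1) ∧
  (∀ l : ℕ, 1 ≤ l → p.parts.count l + p.parts.count (l + 1) = k - 1 →
    l * p.parts.count l + (l + 1) * p.parts.count (l + 1) ≡ a - 1 [MOD 2])

/-- `B̃_{k,a}(n)`. -/
def countBt (k a n : ℕ) : ℕ := Set.ncard {p : n.Partition | IsBressoud k a p}

/-- `Ã_{k,a}(n)`: partitions of `n` with no part `≡ 0, ±a (mod 2k)`. -/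
def countAt (k a n : ℕ) : ℕ :=
  Set.ncard {p : n.Partition | ∀ j ∈ p.parts,
    (j : ZMod (2 * k)) ≠ 0 ∧ (j : ZMod (2 * k)) ≠ (a : ZMod (2 * k)) ∧
      (j : ZMod (2 * k)) ≠ -(a : ZMod (2 * k))}

/-- `W_{k,a}(n)`: partitions counted by `B_{k,a}(n)` in which every even part appears
an even number of times. -/
def countW (k a n : ℕ) : ℕ :=
  Set.ncard {p : n.Partition | IsGordon k a p ∧
    ∀ l : ℕ, l % 2 = 0 → p.parts.count l % 2 = 0}

/-- `W̄_{k,a}(n)`: partitions counted by `B_{k,a}(n)` in which every odd part appears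
an even number of times. -/
def countWbar (k a n : ℕ) : ℕ :=
  Set.ncard {p : n.Partition | IsGordon k a p ∧
    ∀ l : ℕ, l % 2 = 1 → p.parts.count l % 2 = 0}

/-! ### Lattice paths -/

/-- The three kinds of unitary steps. -/
inductive LStep : Type
  | NE | SE | E
deriving DecidableEq

/-- A lattice path, recorded by its starting height on the `y`-axis and its list of
steps; every step advances the `x`-coordinate by `1`. -/
structure LPath : Type where
  start : ℕ
  steps : List LStep

/-- The change in height produced by a step. -/
def LStep.delta : LStep → ℤ
  | .NE => 1
  | .SE => -1
  | .E => 0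

/-- The height (`y`-coordinate) of the vertex of `p` of weight (`x`-coordinate) `i`. -/
def heightAt (p : LPath) (i : ℕ) : ℤ :=
  (p.start : ℤ) + ((p.steps.take i).map LStep.delta).sum

/-- A valid lattice path: it stays in the first quadrant, East steps occur only at
height `0`, it ends on the `x`-axis, and it is either empty or ends with a
South-East step. -/
def ValidPath (p : LPath) : Prop :=
  (∀ i : ℕ, i ≤ p.steps.length → 0 ≤ heightAt p i) ∧
  (∀ i : ℕ, p.steps[i]? = some LStep.E → heightAt p i = 0) ∧
  heightAt p p.steps.length = 0 ∧
  (p.steps = [] ∨ p.steps.getLast? = some LStep.SE)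

/-- The vertex of weight `i` is a peak: it is preceded by a North-East step and
followed by a South-East step. -/
def IsPeak (p : LPath) (i : ℕ) : Prop :=
  1 ≤ i ∧ p.steps[i - 1]? = some LStep.NE ∧ p.steps[i]? = some LStep.SE

instance (p : LPath) (i : ℕ) : Decidable (IsPeak p i) :=
  inferInstanceAs (Decidable (_ ∧ _ ∧ _))

/-- The major index of a path: the sum of the weights of its peaks. -/
def majorIndex (p : LPath) : ℕ :=
  ∑ i ∈ (Finset.range (p.steps.length + 1)).filter (fun i => IsPeak p i), i

/-- The special `(k,a)`-conditions: the path starts at height `k-a` and its height is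
always less than `k`. -/
def SpecialKA (k a : ℕ) (p : LPath) : Prop :=
  p.start = k - a ∧ ∀ i : ℕ, i ≤ p.steps.length → heightAt p i < (k : ℤ)

/-- `E_{k,a}(n)`: the number of valid lattice paths of major index `n` satisfying the
special `(k,a)`-conditions. -/
def countE (k a n : ℕ) : ℕ :=
  Set.ncard {p : LPath | ValidPath p ∧ SpecialKA k a p ∧ majorIndex p = n}

/-- `Ẽ_{k,a}(n)`: as `E_{k,a}(n)`, with the extra requirement that every peak of
height `k-1` has weight congruent to `a-1` modulo `2`. -/
def countEt (k a n : ℕ) : ℕ :=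
  Set.ncard {p : LPath | ValidPath p ∧ SpecialKA k a p ∧ majorIndex p = n ∧
    ∀ i : ℕ, IsPeak p i → heightAt p i = (k : ℤ) - 1 → i % 2 = (a - 1) % 2}

/-- The defining property of the relative height of the peak of weight `i`: there are
vertices `(i', y-h)` and `(i'', y-h)` with `i' < i < i''` such that between them there
is no peak of height `> y` and every peak of height `y` has abscissa `≥ i`
(where `y` is the height of the peak). -/
def RelHeightGE (p : LPath) (i h : ℕ) : Prop :=
  ∃ i' i'' : ℕ, i' < i ∧ i < i'' ∧ i'' ≤ p.steps.length ∧
    heightAt p i' = heightAt p i - h ∧ heightAt p i'' = heightAt p i - h ∧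
    (∀ j : ℕ, i' < j → j < i'' → IsPeak p j → heightAt p j ≤ heightAt p i) ∧
    (∀ j : ℕ, i' < j → j < i'' → IsPeak p j → heightAt p j = heightAt p i → i ≤ j)

/-- The relative height of the peak of weight `i`: the largest `h` with
`RelHeightGE p i h`. -/
def relHeight (p : LPath) (i : ℕ) : ℕ := sSup {h : ℕ | RelHeightGE p i h}

/-- `P_{k,a}(n)`: paths counted by `E_{k,a}(n)` in which the weight and the relative
height of every peak have the same parity. -/
def countP (k a n : ℕ) : ℕ :=
  Set.ncard {p : LPath | ValidPath p ∧ SpecialKA k a p ∧ majorIndex p = n ∧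
    ∀ i : ℕ, IsPeak p i → i % 2 = relHeight p i % 2}

/-- `P̄_{k,a}(n)`: paths counted by `E_{k,a}(n)` whose peaks all have even weight. -/
def countPbar (k a n : ℕ) : ℕ :=
  Set.ncard {p : LPath | ValidPath p ∧ SpecialKA k a p ∧ majorIndex p = n ∧
    ∀ i : ℕ, IsPeak p i → i % 2 = 0}

/-- `Q_{k,a}(n)`: paths counted by `E_{k,a}(n)` whose peaks all have odd weight. -/
def countQ (k a n : ℕ) : ℕ :=
  Set.ncard {p : LPath | ValidPath p ∧ SpecialKA k a p ∧ majorIndex p = n ∧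
    ∀ i : ℕ, IsPeak p i → i % 2 = 1}

/-! ### Peak parity indices -/

/-- The number of parity changes along a list of booleans, starting from `b`. -/
def boolChanges : Bool → List Bool → ℕ
  | _, [] => 0
  | b, x :: xs => (if x = b then 0 else 1) + boolChanges x xs

/-- The weights of the peaks of relative height `r`, from leftmost to rightmost. -/
def rPeaks (p : LPath) (r : ℕ) : List ℕ :=
  Finset.sort
    (@Finset.filter ℕ (fun i => IsPeak p i ∧ relHeight p i = r)
      (Classical.decPred _) (Finset.range (p.steps.length + 1))) (· ≤ ·)

/-- The lower even `r`-peak parity index: the number of times the parity (of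
weight minus relative height) of the peaks of relative height `r` changes,
from leftmost to rightmost, beginning with an even parity. -/
def lowerEvenPeakIndex (p : LPath) (r : ℕ) : ℕ :=
  boolChanges true
    ((rPeaks p r).map fun i : ℕ => decide ((((i : ℤ) - (relHeight p i : ℤ)) % 2 = 0)))

/-- The full lower even peak parity index. -/
def fullLowerEvenPeakIndex (k : ℕ) (p : LPath) : ℕ :=
  ∑ r ∈ Finset.Icc 1 (k - 1), lowerEvenPeakIndex p r

/-- The sum of the relative heights of all peaks of a path. -/
def sumRelHeights (p : LPath) : ℕ :=
  ∑ i ∈ (Finset.range (p.steps.length + 1)).filter (fun i => IsPeak p i), relHeight p i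

/-- `E_{k,k}(l,m,n)`. -/
def countEkk (k l m n : ℕ) : ℕ :=
  Set.ncard {p : LPath | ValidPath p ∧ SpecialKA k k p ∧ majorIndex p = n ∧
    sumRelHeights p = m ∧ fullLowerEvenPeakIndex k p = l}

/-! ### Gordon marking and clusters -/

/-- The smallest positive mark not yet used, among the already marked parts `acc`,
by a part equal to `v` or `v - 1`. -/
def freshMark (acc : List (ℕ × ℕ)) (v : ℕ) : ℕ :=
  ((List.range (acc.length + 2)).filter
    (fun mk => decide (1 ≤ mk ∧ ∀ q ∈ acc, (q.1 = v ∨ q.1 + 1 = v) → q.2 ≠ mk))).headI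

/-- The Gordon marking of an increasing list of parts: processing parts in increasing
order, each part receives the smallest positive mark different from the marks of all
previously marked equal or nearly equal (differing by 1) parts.  The result is the
list of (part, mark) pairs in increasing order of parts. -/
def gordonMark (l : List ℕ) : List (ℕ × ℕ) :=
  l.foldl (fun acc v => acc ++ [(v, freshMark acc v)]) []

/-- The Gordon marking of a partition. -/
def gordonMarking {n : ℕ} (p : n.Partition) : List (ℕ × ℕ) :=
  gordonMark (p.parts.sort (· ≤ ·))

/-- `C` is an `r`-cluster (with `r = C.length`) of the marked partition `gm`:
its `j`-th entry is `j`-marked, its parts weakly increase with successive gaps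
at most `1`, and no `(r+1)`-marked part of `gm` equals its largest part or its
largest part plus one. -/
def IsCluster (gm C : List (ℕ × ℕ)) : Prop :=
  C ≠ [] ∧
  (∀ j : ℕ, j < C.length → (C.getD j (0, 0)).2 = j + 1) ∧
  (∀ j : ℕ, j + 1 < C.length →
    (C.getD j (0, 0)).1 ≤ (C.getD (j + 1) (0, 0)).1 ∧
      (C.getD (j + 1) (0, 0)).1 ≤ (C.getD j (0, 0)).1 + 1) ∧
  (∀ q ∈ gm, q.2 = C.length + 1 →
    q.1 ≠ (C.getLastD (0, 0)).1 ∧ q.1 ≠ (C.getLastD (0, 0)).1 + 1)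

/-- `D` is a decomposition of the marked partition `gm` into non-overlapping
clusters. -/
def IsClusterDecomp (gm : List (ℕ × ℕ)) (D : List (List (ℕ × ℕ))) : Prop :=
  (∀ C ∈ D, IsCluster gm C) ∧
  (D.map (fun C => (C : Multiset (ℕ × ℕ)))).sum = (gm : Multiset (ℕ × ℕ))

/-- The parity of a cluster is the opposite of the parity of the number of its even
parts; this is `true` iff the cluster parity is even. -/
def clusterEvenParity (C : List (ℕ × ℕ)) : Bool :=
  decide ((C.countP fun q => decide (q.1 % 2 = 0)) % 2 = 1)

/-- The lower even `r`-cluster parity index of a cluster decomposition `D`: the number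
of times the parity of the `r`-clusters changes, from the one with the smallest
`r`-marked part to the one with the largest, beginning with an even parity. -/
def lowerEvenClusterIndex (D : List (List (ℕ × ℕ))) (r : ℕ) : ℕ :=
  boolChanges true
    (((D.filter (fun C => C.length == r)).insertionSort
        (fun C₁ C₂ => (C₁.getLastD (0, 0)).1 ≤ (C₂.getLastD (0, 0)).1)).map
      clusterEvenParity)

/-- The full lower even cluster parity index. -/
def fullLowerEvenClusterIndex (k : ℕ) (D : List (List (ℕ × ℕ))) : ℕ :=
  ∑ r ∈ Finset.Icc 1 (k - 1), lowerEvenClusterIndex D r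

/-- `B_{k,k}(l,m,n)`: partitions of `n` into `m` parts satisfying the Gordon difference
condition, whose (unique) cluster decomposition has full lower even cluster parity
index `l`. -/
def countBkk (k l m n : ℕ) : ℕ :=
  Set.ncard {p : n.Partition |
    (Multiset.card p.parts) = m ∧
    (∀ t : ℕ, 1 ≤ t → p.parts.count t + p.parts.count (t + 1) ≤ k - 1) ∧
    ∃ D : List (List (ℕ × ℕ)), IsClusterDecomp (gordonMarking p) D ∧
      fullLowerEvenClusterIndex k D = l}

end

/-! ### Auxiliary: q-series side -/
noncomputable section QAux
open Finset PowerSeries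

/-- Antitone condition on 1-based tuples. -/
def Anti (d : ℕ) (N : Fin d → ℕ) : Prop := ∀ i j : Fin d, i ≤ j → N j ≤ N i

/-- The finite set of antitone tuples with largest entry `m`. -/
def Tset (d m : ℕ) : Finset (Fin d → ℕ) :=
  (Fintype.piFinset fun _ : Fin d => Finset.range (m + 1)).filter
    (fun N => (∀ i j : Fin d, i ≤ j → N j ≤ N i) ∧ Np d N 1 = m)

lemma Np_fin (d : ℕ) (N : Fin d → ℕ) (t : Fin d) : Np d N (t.val + 1) = N t := by
  simp [Np, t.isLt]

lemma Np_out (d : ℕ) (N : Fin d → ℕ) (j : ℕ) (h : ¬ (j - 1 < d)) : Np d N j = 0 := by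
  simp [Np, h]

lemma Np_anti {d : ℕ} {N : Fin d → ℕ} (hN : Anti d N) {i j : ℕ} (hi : 1 ≤ i) (hij : i ≤ j) :
    Np d N j ≤ Np d N i := by
  unfold Np
  split
  · rename_i hj
    split
    · rename_i hi'
      exact hN ⟨i-1, hi'⟩ ⟨j-1, hj⟩ (by simp [Fin.le_def]; omega)
    · omega
  · exact Nat.zero_le _

lemma mem_Tset {d m : ℕ} {N : Fin d → ℕ} :
    N ∈ Tset d m ↔ Anti d N ∧ Np d N 1 = m := by
  constructor
  · intro h
    simp only [Tset, mem_filter] at h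
    exact h.2
  · intro ⟨h1, h2⟩
    simp only [Tset, mem_filter, Fintype.mem_piFinset, Finset.mem_range]
    refine ⟨fun t => ?_, h1, h2⟩
    have : Np d N (t.val + 1) ≤ Np d N 1 := Np_anti h1 le_rfl (by omega)
    rw [Np_fin] at this
    omega

lemma Np_le_of_mem {d m : ℕ} {N : Fin d → ℕ} (hN : N ∈ Tset d m) (j : ℕ) :
    Np d N j ≤ m := by
  rw [mem_Tset] at hN
  rcases Nat.eq_zero_or_pos j with h | h
  · subst h
    have : Np d N 0 = Np d N 1 := by unfold Np; simp
    rw [this, hN.2]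
  · calc Np d N j ≤ Np d N 1 := Np_anti hN.1 le_rfl h
    _ = m := hN.2

/-- gaps of a tuple. -/
def gapF (d : ℕ) (N : Fin d → ℕ) (j : ℕ) : ℕ := Np d N j - Np d N (j + 1)

/-- the product of inverse Pochhammers over the gaps. -/
def PInv (d : ℕ) (N : Fin d → ℕ) : PowerSeries ℚ :=
  ∏ j ∈ Icc 1 d, (pochFin 1 1 (gapF d N j))⁻¹

/-- the exponent. -/
def eBF (d b : ℕ) (N : Fin d → ℕ) : ℕ :=
  (∑ j ∈ Icc 1 d, Np d N j ^ 2) + ∑ j ∈ Icc b d, Np d N j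

/-- the sub-multisum with fixed largest part `m`. -/
def RserD (d b m : ℕ) : PowerSeries ℚ :=
  ∑ N ∈ Tset d m, (PowerSeries.X : PowerSeries ℚ) ^ eBF d b N * PInv d N

/-- the `U`-series. -/
def UserD (d b m : ℕ) : PowerSeries ℚ :=
  RserD d b m - (PowerSeries.X : PowerSeries ℚ) ^ m * RserD d (b+1) m

end QAux
noncomputable section QAux2
open Finset PowerSeries

lemma constantCoeff_pochFin (c d n : ℕ) (hc : 1 ≤ c) :
    constantCoeff (pochFin c d n) = 1 := by
  unfold pochFin
  rw [map_prod]
  apply Finset.prod_eq_one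
  intro i _
  rw [map_sub, map_one, map_pow, constantCoeff_X, zero_pow (by omega), sub_zero]

lemma pochFin_succ (n : ℕ) :
    pochFin 1 1 (n + 1) = pochFin 1 1 n * (1 - (PowerSeries.X : PowerSeries ℚ) ^ (n + 1)) := by
  unfold pochFin
  rw [Finset.prod_range_succ]
  congr 3
  omega

lemma one_sub_X_pow_mul_pochFin_inv (n : ℕ) :
    (1 - (PowerSeries.X : PowerSeries ℚ) ^ (n + 1)) * (pochFin 1 1 (n + 1))⁻¹
      = (pochFin 1 1 n)⁻¹ := by
  rw [pochFin_succ, PowerSeries.mul_inv_rev]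
  rw [← mul_assoc, mul_comm (1 - (X:PowerSeries ℚ)^(n+1)), mul_assoc,
    ← mul_assoc (1 - (X:PowerSeries ℚ)^(n+1))⁻¹]
  rw [PowerSeries.inv_mul_cancel _ (by
    rw [map_sub, map_one, map_pow, constantCoeff_X, zero_pow (by omega), sub_zero]
    exact one_ne_zero), one_mul]

/-- add 1 to the first `i` entries. -/
def addPre (d i : ℕ) (N : Fin d → ℕ) : Fin d → ℕ :=
  fun t => N t + if (t : ℕ) < i then 1 else 0

lemma Np_addPre {d : ℕ} (i : ℕ) (hid : i ≤ d) (N : Fin d → ℕ) {j : ℕ} (hj : 1 ≤ j) :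
    Np d (addPre d i N) j = Np d N j + if j ≤ i then 1 else 0 := by
  unfold Np addPre
  split
  · rename_i h
    have : j - 1 < i ↔ j ≤ i := by omega
    simp [this]
  · rename_i h
    have : ¬ (j ≤ i) := by omega
    simp [this]

lemma gapF_addPre {d : ℕ} {i : ℕ} (hi1 : 1 ≤ i) (hid : i ≤ d) {N : Fin d → ℕ}
    (hN : Anti d N) {j : ℕ} (hj : 1 ≤ j) :
    gapF d (addPre d i N) j = gapF d N j + if j = i then 1 else 0 := by
  unfold gapF
  rw [Np_addPre i hid N hj, Np_addPre i hid N (by omega)]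
  have hmono : Np d N (j+1) ≤ Np d N j := Np_anti hN hj (by omega)
  rcases Nat.lt_trichotomy j i with h | h | h
  · simp [show j ≤ i by omega, show j + 1 ≤ i by omega, show j ≠ i by omega]
  · subst h
    simp [show ¬ (j + 1 ≤ j) by omega]
    omega
  · simp [show ¬ (j ≤ i) by omega, show ¬ (j + 1 ≤ i) by omega, show j ≠ i by omega]

lemma addPre_mem_Tset {d i m : ℕ} (hi1 : 1 ≤ i) (hid : i ≤ d) {N : Fin d → ℕ}
    (hN : N ∈ Tset d (m - 1)) (hm : 1 ≤ m) : addPre d i N ∈ Tset d m := by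
  rw [mem_Tset] at hN ⊢
  constructor
  · intro s t hst
    have := hN.1 s t hst
    unfold addPre
    have hst' : (s:ℕ) ≤ (t:ℕ) := hst
    split <;> split <;> omega
  · rw [Np_addPre i hid N le_rfl]
    simp [hi1, hN.2]
    omega

end QAux2
noncomputable section QAux3
open Finset PowerSeries

def subPre (d i : ℕ) (M : Fin d → ℕ) : Fin d → ℕ :=
  fun t => M t - if (t : ℕ) < i then 1 else 0

lemma subPre_mem_Tset {d i m : ℕ} (hi1 : 1 ≤ i) (hid : i ≤ d) {M : Fin d → ℕ}
    (hM : M ∈ Tset d m) (hg : 1 ≤ gapF d M i) (hm : 1 ≤ m) :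
    subPre d i M ∈ Tset d (m - 1) := by
  have hMa := (mem_Tset.mp hM).1
  have hM1 := (mem_Tset.mp hM).2
  have key : ∀ t : Fin d, (t : ℕ) < i → 1 ≤ M t := by
    intro t ht
    have h1 : Np d M i ≤ Np d M (t.val + 1) := Np_anti hMa (by omega) (by omega)
    rw [Np_fin] at h1
    unfold gapF at hg
    omega
  rw [mem_Tset]
  constructor
  · intro s t hst
    have h := hMa s t hst
    have hst' : (s:ℕ) ≤ (t:ℕ) := hst
    unfold subPre
    by_cases h1 : (s:ℕ) < i <;> by_cases h2 : (t:ℕ) < i <;> simp [h1, h2]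
    · omega
    · -- s < i ≤ t : need M t ≤ M s - 1
      have ha : Np d M (s.val + 1) ≤ Np d M 1 := Np_anti hMa le_rfl (by omega)
      have hb : Np d M i ≤ Np d M (s.val+1) := Np_anti hMa (by omega) (by omega)
      have hc : Np d M (t.val+1) ≤ Np d M (i+1) := Np_anti hMa (by omega) (by omega)
      rw [Np_fin] at hb hc
      unfold gapF at hg
      omega
    · omega
    · omega
  · have h0 : (0 : ℕ) < i := hi1
    have hd0 : 0 < d := by omega
    have e1 : Np d (subPre d i M) 1 = subPre d i M ⟨0, hd0⟩ := by
      unfold Np; simp [hd0]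
    have e2 : Np d M 1 = M ⟨0, hd0⟩ := by unfold Np; simp [hd0]
    rw [e1]
    have := key ⟨0, hd0⟩ (by simpa using h0)
    unfold subPre
    simp only [show ((⟨0,hd0⟩ : Fin d) : ℕ) < i from by simpa using h0, if_pos]
    omega

lemma addPre_subPre {d i m : ℕ} (hi1 : 1 ≤ i) (hid : i ≤ d) {M : Fin d → ℕ}
    (hM : M ∈ Tset d m) (hg : 1 ≤ gapF d M i) (hm : 1 ≤ m) :
    addPre d i (subPre d i M) = M := by
  have hMa := (mem_Tset.mp hM).1
  funext t
  unfold addPre subPre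
  by_cases h : (t:ℕ) < i <;> simp [h]
  have h1 : Np d M i ≤ Np d M (t.val + 1) := Np_anti hMa (by omega) (by omega)
  rw [Np_fin] at h1
  unfold gapF at hg
  omega

lemma subPre_addPre {d i : ℕ} (N : Fin d → ℕ) : subPre d i (addPre d i N) = N := by
  funext t
  unfold addPre subPre
  by_cases h : (t:ℕ) < i <;> simp [h]

lemma gapF_eq_of_ne {d i : ℕ} (hid : i ≤ d) (N : Fin d → ℕ) {j : ℕ} (hj : 1 ≤ j)
    (hji : j ≠ i) : gapF d (addPre d i N) j = gapF d N j := by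
  unfold gapF
  rw [Np_addPre i hid N hj, Np_addPre i hid N (by omega)]
  rcases Nat.lt_trichotomy j i with h | h | h
  · simp [show j ≤ i by omega, show j + 1 ≤ i by omega]
  · omega
  · simp [show ¬ (j ≤ i) by omega, show ¬ (j + 1 ≤ i) by omega]

/-- Key reindexing: stripping a `(1 - q^{n_i})` factor shifts the prefix down. -/
lemma sub_reindex (d i : ℕ) (hi1 : 1 ≤ i) (hid : i ≤ d) (m : ℕ) (hm : 1 ≤ m)
    (c : (Fin d → ℕ) → ℕ) :
    ∑ M ∈ Tset d m,
        (1 - (PowerSeries.X : PowerSeries ℚ) ^ (gapF d M i)) * X ^ (c M) * PInv d M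
      = ∑ N ∈ Tset d (m - 1), (X : PowerSeries ℚ) ^ (c (addPre d i N)) * PInv d N := by
  rw [← Finset.sum_filter_of_ne (p := fun M => 1 ≤ gapF d M i)
    (by intro M hM hne
        by_contra h
        apply hne
        have : gapF d M i = 0 := by omega
        rw [this]
        simp)]
  apply Finset.sum_nbij' (i := fun M => subPre d i M) (j := fun N => addPre d i N)
  · intro M hM
    rw [Finset.mem_filter] at hM
    exact subPre_mem_Tset hi1 hid hM.1 hM.2 hm
  · intro N hN
    rw [Finset.mem_filter]
    have h1 := addPre_mem_Tset hi1 hid hN hm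
    refine ⟨h1, ?_⟩
    rw [gapF_addPre hi1 hid (mem_Tset.mp hN).1 hi1]
    simp
  · intro M hM
    rw [Finset.mem_filter] at hM
    exact addPre_subPre hi1 hid hM.1 hM.2 hm
  · intro N hN
    exact subPre_addPre N
  · intro M hM
    rw [Finset.mem_filter] at hM
    rw [addPre_subPre hi1 hid hM.1 hM.2 hm]
    -- term equality: (1 - X^{gap_i M}) * X^{c M} * PInv M = X^{c M} * PInv (subPre M)
    have hMa := (mem_Tset.mp hM.1).1
    obtain ⟨g, hgap⟩ : ∃ g, gapF d M i = g + 1 := ⟨gapF d M i - 1, by omega⟩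
    unfold PInv
    rw [← Finset.mul_prod_erase (Icc 1 d) _ (Finset.mem_Icc.mpr ⟨hi1, hid⟩),
        ← Finset.mul_prod_erase (Icc 1 d) (f := fun j => (pochFin 1 1 (gapF d (subPre d i M) j))⁻¹)
          (a := i) (Finset.mem_Icc.mpr ⟨hi1, hid⟩)]
    have hgs : gapF d (subPre d i M) i = g := by
      have := gapF_addPre (N := subPre d i M) hi1 hid
        (mem_Tset.mp (subPre_mem_Tset hi1 hid hM.1 hM.2 hm)).1 hi1
      rw [addPre_subPre hi1 hid hM.1 hM.2 hm] at this
      simp at this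
      omega
    have hrest : ∀ j ∈ (Icc 1 d).erase i,
        (pochFin 1 1 (gapF d M j))⁻¹ = (pochFin 1 1 (gapF d (subPre d i M) j))⁻¹ := by
      intro j hj
      rw [Finset.mem_erase, Finset.mem_Icc] at hj
      have := gapF_eq_of_ne (N := subPre d i M) hid (hj := hj.2.1) hj.1
      rw [addPre_subPre hi1 hid hM.1 hM.2 hm] at this
      rw [this]
    rw [Finset.prod_congr rfl hrest, hgap, hgs]
    rw [show (1 - (X:PowerSeries ℚ) ^ (g+1)) * X ^ (c M) *
          ((pochFin 1 1 (g+1))⁻¹ * ∏ j ∈ (Icc 1 d).erase i, (pochFin 1 1 (gapF d (subPre d i M) j))⁻¹)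
        = X ^ (c M) * (((1 - (X:PowerSeries ℚ) ^ (g+1)) * (pochFin 1 1 (g+1))⁻¹) *
            ∏ j ∈ (Icc 1 d).erase i, (pochFin 1 1 (gapF d (subPre d i M) j))⁻¹) from by ring]
    rw [one_sub_X_pow_mul_pochFin_inv]

end QAux3
noncomputable section QAux4
open Finset PowerSeries

/-- prefix sums. -/
def Spre (d i : ℕ) (N : Fin d → ℕ) : ℕ := ∑ j ∈ Icc 1 i, Np d N j

lemma eBF_addPre {d b i : ℕ} (hid : i ≤ d) (hib : i < b) (N : Fin d → ℕ) :
    eBF d b (addPre d i N) = eBF d b N + 2 * Spre d i N + i := by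
  unfold eBF Spre
  have hq : ∑ j ∈ Icc 1 d, Np d (addPre d i N) j ^ 2
      = ∑ j ∈ Icc 1 d, (Np d N j ^ 2 + if j ≤ i then 2 * Np d N j + 1 else 0) := by
    apply Finset.sum_congr rfl
    intro j hj
    rw [Finset.mem_Icc] at hj
    rw [Np_addPre i hid N hj.1]
    split <;> ring
  have hl : ∑ j ∈ Icc b d, Np d (addPre d i N) j = ∑ j ∈ Icc b d, Np d N j := by
    apply Finset.sum_congr rfl
    intro j hj
    rw [Finset.mem_Icc] at hj
    rw [Np_addPre i hid N (by omega)]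
    simp [show ¬ (j ≤ i) by omega]
  rw [hq, hl, Finset.sum_add_distrib, ← Finset.sum_filter]
  have hfil : (Icc 1 d).filter (fun j => j ≤ i) = Icc 1 i := by
    ext j
    simp only [Finset.mem_filter, Finset.mem_Icc]
    omega
  rw [hfil, Finset.sum_add_distrib, ← Finset.mul_sum, Finset.sum_const, Nat.card_Icc]
  simp only [smul_eq_mul]
  omega

lemma eBF_step {d b : ℕ} (hb : 1 ≤ b) (N : Fin d → ℕ) :
    eBF d b N = eBF d (b+1) N + Np d N b := by
  unfold eBF
  rcases le_or_gt b d with h | h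
  · have : ∑ j ∈ Icc b d, Np d N j = Np d N b + ∑ j ∈ Icc (b+1) d, Np d N j := by
      rw [← Finset.sum_insert (s := Icc (b+1) d) (a := b)
        (by simp only [Finset.mem_Icc, not_and]; omega)]
      congr 1
      ext j
      simp only [Finset.mem_insert, Finset.mem_Icc]
      omega
    omega
  · have h1 : Icc b d = (∅ : Finset ℕ) := Finset.Icc_eq_empty (by omega)
    have h2 : Icc (b+1) d = (∅ : Finset ℕ) := Finset.Icc_eq_empty (by omega)
    rw [h1, h2, Np_out d N b (by omega)]
    simp

lemma Spre_step {d : ℕ} (i : ℕ) (hi : 1 ≤ i) (N : Fin d → ℕ) :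
    Spre d i N = Spre d (i-1) N + Np d N i := by
  unfold Spre
  have hins : Icc 1 i = insert i (Icc 1 (i-1)) := by
    ext j
    simp only [Finset.mem_insert, Finset.mem_Icc]
    omega
  rw [hins, Finset.sum_insert (by simp only [Finset.mem_Icc, not_and]; omega)]
  omega

/-- the `Φ` sums. -/
def PhiS (d b m j : ℕ) : PowerSeries ℚ :=
  ∑ N ∈ Tset d (m-1),
    (PowerSeries.X : PowerSeries ℚ) ^ (eBF d b N + 2 * Spre d (j-1) N + Np d N j + j) * PInv d N

/-- the `E` sums. -/
def ES (d b m j : ℕ) : PowerSeries ℚ :=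
  ∑ M ∈ Tset d m,
    (PowerSeries.X : PowerSeries ℚ) ^ eBF d b M
      * ((1 - (PowerSeries.X : PowerSeries ℚ) ^ (m - Np d M j))
        * (1 - (PowerSeries.X : PowerSeries ℚ) ^ (m + Np d M j))) * PInv d M

lemma ES_one (d b m : ℕ) : ES d b m 1 = 0 := by
  unfold ES
  apply Finset.sum_eq_zero
  intro M hM
  rw [(mem_Tset.mp hM).2]
  simp

/-- L1 : telescoping step. -/
lemma ES_sub (d b m : ℕ) (j : ℕ) (hj2 : 2 ≤ j) (hjb : j < b) (hjd : j - 1 ≤ d) (hm : 1 ≤ m) :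
    ES d b m j = ES d b m (j-1)
      + (PowerSeries.X : PowerSeries ℚ) ^ (m-1) * (PhiS d b m (j-1) - PhiS d b m j) := by
  have key : ES d b m j - ES d b m (j-1)
      = (∑ M ∈ Tset d m, (1 - (X:PowerSeries ℚ) ^ gapF d M (j-1))
            * X ^ (eBF d b M + (m - Np d M (j-1))) * PInv d M)
        - ∑ M ∈ Tset d m, (1 - (X:PowerSeries ℚ) ^ gapF d M (j-1))
            * X ^ (eBF d b M + (m + Np d M j)) * PInv d M := by
    unfold ES
    rw [← Finset.sum_sub_distrib, ← Finset.sum_sub_distrib]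
    apply Finset.sum_congr rfl
    intro M hM
    have hMa := (mem_Tset.mp hM).1
    have h1 : Np d M j ≤ m := Np_le_of_mem hM j
    have h2 : Np d M (j-1) ≤ m := Np_le_of_mem hM (j-1)
    have h3 : Np d M j ≤ Np d M (j-1) := Np_anti hMa (by omega) (by omega)
    have hg : gapF d M (j-1) = Np d M (j-1) - Np d M j := by
      unfold gapF
      congr 2
      omega
    -- pure power series algebra on exponents
    have e1 : (m - Np d M (j-1)) + gapF d M (j-1) = m - Np d M j := by rw [hg]; omega
    have e2 : (m + Np d M j) + gapF d M (j-1) = m + Np d M (j-1) := by rw [hg]; omega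
    have e3 : (m - Np d M j) + (m + Np d M j) = 2 * m := by omega
    have e4 : (m - Np d M (j-1)) + (m + Np d M (j-1)) = 2 * m := by omega
    have expand : ∀ u v : ℕ, u + v = 2*m →
        (1 - (X:PowerSeries ℚ)^u) * (1 - (X:PowerSeries ℚ)^v)
          = 1 - X^u - X^v + X^(2*m) := by
      intro u v huv
      have h5 : (X:PowerSeries ℚ)^u * X^v = X^(2*m) := by rw [← pow_add, huv]
      rw [show (1 - (X:PowerSeries ℚ)^u)*(1-X^v) = 1 - X^u - X^v + X^u*X^v from by ring, h5]
    rw [expand _ _ e3, expand _ _ e4]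
    have f1 : (1 - (X:PowerSeries ℚ) ^ gapF d M (j-1)) * X ^ (eBF d b M + (m - Np d M (j-1)))
        = X ^ (eBF d b M + (m - Np d M (j-1))) - X ^ (eBF d b M + (m - Np d M j)) := by
      have e1' : eBF d b M + (m - Np d M j)
          = (eBF d b M + (m - Np d M (j-1))) + gapF d M (j-1) := by omega
      rw [e1', pow_add]
      ring
    have f2 : (1 - (X:PowerSeries ℚ) ^ gapF d M (j-1)) * X ^ (eBF d b M + (m + Np d M j))
        = X ^ (eBF d b M + (m + Np d M j)) - X ^ (eBF d b M + (m + Np d M (j-1))) := by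
      have e2' : eBF d b M + (m + Np d M (j-1))
          = (eBF d b M + (m + Np d M j)) + gapF d M (j-1) := by omega
      rw [e2', pow_add]
      ring
    rw [f1, f2]
    have g1 : (X:PowerSeries ℚ) ^ eBF d b M * (1 - X^(m - Np d M j) - X^(m+Np d M j) + X^(2*m))
        = X ^ eBF d b M - X ^ (eBF d b M + (m - Np d M j)) - X ^ (eBF d b M + (m + Np d M j))
          + X ^ (eBF d b M + 2*m) := by
      simp only [pow_add]
      ring
    have g2 : (X:PowerSeries ℚ) ^ eBF d b M * (1 - X^(m - Np d M (j-1)) - X^(m+Np d M (j-1)) + X^(2*m))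
        = X ^ eBF d b M - X ^ (eBF d b M + (m - Np d M (j-1))) - X ^ (eBF d b M + (m + Np d M (j-1)))
          + X ^ (eBF d b M + 2*m) := by
      simp only [pow_add]
      ring
    rw [g1, g2]
    ring
  -- now reindex both sums
  have r1 := sub_reindex d (j-1) (by omega) hjd m hm
    (fun M => eBF d b M + (m - Np d M (j-1)))
  have r2 := sub_reindex d (j-1) (by omega) hjd m hm
    (fun M => eBF d b M + (m + Np d M j))
  rw [r1, r2] at key
  have c1 : ∀ N ∈ Tset d (m-1),
      eBF d b (addPre d (j-1) N) + (m - Np d (addPre d (j-1) N) (j-1))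
        = (m-1) + (eBF d b N + 2 * Spre d (j-1-1) N + Np d N (j-1) + (j-1)) := by
    intro N hN
    rw [eBF_addPre hjd (by omega) N, Np_addPre (j-1) hjd N (by omega)]
    simp only [le_refl, if_pos]
    have hS := Spre_step (j-1) (by omega) N
    have hle : Np d N (j-1) ≤ m - 1 := Np_le_of_mem hN (j-1)
    omega
  have c2 : ∀ N ∈ Tset d (m-1),
      eBF d b (addPre d (j-1) N) + (m + Np d (addPre d (j-1) N) j)
        = (m-1) + (eBF d b N + 2 * Spre d (j-1) N + Np d N j + j) := by
    intro N hN
    rw [eBF_addPre hjd (by omega) N, Np_addPre (j-1) hjd N (by omega)]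
    simp only [show ¬ (j ≤ j - 1) by omega, if_neg, not_false_iff]
    omega
  have t1 : ∑ N ∈ Tset d (m-1),
        (X:PowerSeries ℚ) ^ (eBF d b (addPre d (j-1) N) + (m - Np d (addPre d (j-1) N) (j-1)))
          * PInv d N
      = X ^ (m-1) * PhiS d b m (j-1) := by
    unfold PhiS
    rw [Finset.mul_sum]
    apply Finset.sum_congr rfl
    intro N hN
    rw [c1 N hN, pow_add, mul_assoc]
  have t2 : ∑ N ∈ Tset d (m-1),
        (X:PowerSeries ℚ) ^ (eBF d b (addPre d (j-1) N) + (m + Np d (addPre d (j-1) N) j))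
          * PInv d N
      = X ^ (m-1) * PhiS d b m j := by
    unfold PhiS
    rw [Finset.mul_sum]
    apply Finset.sum_congr rfl
    intro N hN
    rw [c2 N hN, pow_add, mul_assoc]
  rw [t1, t2] at key
  have : ES d b m j = ES d b m (j-1) + (ES d b m j - ES d b m (j-1)) := by ring
  rw [this, key]
  ring

end QAux4
noncomputable section QAux5
open Finset PowerSeries

lemma UserD_eq_sum (d b m : ℕ) (hb : 1 ≤ b) :
    UserD d b m = ∑ M ∈ Tset d m,
      (1 - (PowerSeries.X : PowerSeries ℚ) ^ (m - Np d M b)) * X ^ eBF d b M * PInv d M := by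
  unfold UserD RserD
  rw [Finset.mul_sum, ← Finset.sum_sub_distrib]
  apply Finset.sum_congr rfl
  intro M hM
  have h1 : Np d M b ≤ m := Np_le_of_mem hM b
  have h2 : eBF d b M = eBF d (b+1) M + Np d M b := eBF_step hb M
  have h3 : m + eBF d (b+1) M = eBF d b M + (m - Np d M b) := by omega
  rw [show (X:PowerSeries ℚ) ^ m * (X ^ eBF d (b+1) M * PInv d M)
      = X ^ (m + eBF d (b+1) M) * PInv d M from by rw [pow_add]; ring, h3, pow_add]
  ring

lemma UserD_one (d m : ℕ) : UserD d 1 m = 0 := by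
  rw [UserD_eq_sum d 1 m le_rfl]
  apply Finset.sum_eq_zero
  intro M hM
  rw [(mem_Tset.mp hM).2]
  simp

/-- L3. -/
lemma UserD_key (d b m : ℕ) (hb2 : 2 ≤ b) (hbd : b ≤ d + 1) (hm : 1 ≤ m) :
    UserD d b m - (PowerSeries.X : PowerSeries ℚ) ^ m * UserD d (b-1) m
      = ES d b m (b-1) + (PowerSeries.X : PowerSeries ℚ) ^ (m-1) * PhiS d b m (b-1) := by
  rw [UserD_eq_sum d b m (by omega), UserD_eq_sum d (b-1) m (by omega)]
  have key : ∀ M ∈ Tset d m,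
      (1 - (X:PowerSeries ℚ) ^ (m - Np d M b)) * X ^ eBF d b M * PInv d M
        - X ^ m * ((1 - (X:PowerSeries ℚ) ^ (m - Np d M (b-1))) * X ^ eBF d (b-1) M * PInv d M)
      = (X ^ eBF d b M
          * ((1 - (X:PowerSeries ℚ) ^ (m - Np d M (b-1))) * (1 - X ^ (m + Np d M (b-1))))
          * PInv d M)
        + (1 - (X:PowerSeries ℚ) ^ gapF d M (b-1))
            * X ^ (eBF d b M + (m - Np d M (b-1))) * PInv d M := by
    intro M hM
    have hMa := (mem_Tset.mp hM).1
    have h1 : Np d M b ≤ m := Np_le_of_mem hM b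
    have h2 : Np d M (b-1) ≤ m := Np_le_of_mem hM (b-1)
    have h3 : Np d M b ≤ Np d M (b-1) := Np_anti hMa (by omega) (by omega)
    have hg : gapF d M (b-1) = Np d M (b-1) - Np d M b := by
      unfold gapF; congr 2; omega
    have hstep : eBF d (b-1) M = eBF d b M + Np d M (b-1) := by
      have := eBF_step (b := b-1) (by omega) M
      rw [show b - 1 + 1 = b by omega] at this
      omega
    -- (1 - X^{m-M_b}) = (1 - X^{m-M_{b-1}}) + X^{m-M_{b-1}}(1 - X^{g_{b-1}})
    have split1 : (1 - (X:PowerSeries ℚ) ^ (m - Np d M b))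
        = (1 - X ^ (m - Np d M (b-1)))
          + X ^ (m - Np d M (b-1)) * (1 - X ^ gapF d M (b-1)) := by
      have : (m - Np d M (b-1)) + gapF d M (b-1) = m - Np d M b := by omega
      rw [show (X:PowerSeries ℚ) ^ (m - Np d M (b-1)) * (1 - X ^ gapF d M (b-1))
          = X ^ (m - Np d M (b-1)) - X ^ ((m - Np d M (b-1)) + gapF d M (b-1)) from by
            rw [pow_add]; ring, this]
      ring
    rw [split1]
    have q1 : (X:PowerSeries ℚ) ^ m * X ^ eBF d (b-1) M
        = X ^ eBF d b M * X ^ (m + Np d M (b-1)) := by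
      rw [← pow_add, ← pow_add]
      congr 1
      omega
    have q2 : (X:PowerSeries ℚ) ^ (m - Np d M (b-1)) * X ^ eBF d b M
        = X ^ (eBF d b M + (m - Np d M (b-1))) := by
      rw [← pow_add]; congr 1; omega
    calc ((1 - (X:PowerSeries ℚ)^(m - Np d M (b-1)))
            + X ^ (m - Np d M (b-1)) * (1 - X ^ gapF d M (b-1))) * X ^ eBF d b M * PInv d M
          - X ^ m * ((1 - X ^ (m - Np d M (b-1))) * X ^ eBF d (b-1) M * PInv d M)
        = (1 - X^(m - Np d M (b-1))) * (X ^ eBF d b M - X ^ m * X ^ eBF d (b-1) M) * PInv d M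
          + (1 - X ^ gapF d M (b-1)) * (X ^ (m - Np d M (b-1)) * X ^ eBF d b M) * PInv d M := by
          ring
      _ = _ := by
          rw [q1, q2]
          ring
  rw [Finset.mul_sum, ← Finset.sum_sub_distrib, Finset.sum_congr rfl key,
    Finset.sum_add_distrib]
  congr 1
  rw [sub_reindex d (b-1) (by omega) (by omega) m hm
    (fun M => eBF d b M + (m - Np d M (b-1)))]
  unfold PhiS
  rw [Finset.mul_sum]
  apply Finset.sum_congr rfl
  intro N hN
  have c1 : eBF d b (addPre d (b-1) N) + (m - Np d (addPre d (b-1) N) (b-1))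
      = (m-1) + (eBF d b N + 2 * Spre d (b-1-1) N + Np d N (b-1) + (b-1)) := by
    rw [eBF_addPre (by omega) (by omega) N, Np_addPre (b-1) (by omega) N (by omega)]
    simp only [le_refl, if_pos]
    have hS := Spre_step (b-1) (by omega) N
    have hle : Np d N (b-1) ≤ m - 1 := Np_le_of_mem hN (b-1)
    omega
  rw [c1, pow_add, mul_assoc]
end QAux5
noncomputable section QAux6
open Finset PowerSeries

lemma ES_telescope (d b m : ℕ) (hbd : b ≤ d + 1) (hm : 1 ≤ m) :
    ∀ j, 1 ≤ j → j ≤ b - 1 →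
      ES d b m j = (PowerSeries.X : PowerSeries ℚ) ^ (m-1) * (PhiS d b m 1 - PhiS d b m j) := by
  intro j
  induction j with
  | zero => omega
  | succ i ih =>
    intro _ hj
    rcases Nat.eq_zero_or_pos i with hi | hi
    · subst hi
      rw [ES_one]
      simp
    · have h1 := ih hi (by omega)
      have h2 := ES_sub d b m (i+1) (by omega) (by omega) (by omega) hm
      rw [show i + 1 - 1 = i from rfl] at h2
      rw [h2, h1]
      ring

lemma PhiS_one (d b m : ℕ) (hm : 1 ≤ m) :
    (PowerSeries.X : PowerSeries ℚ) ^ (m-1) * PhiS d b m 1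
      = (PowerSeries.X : PowerSeries ℚ) ^ (2*m-1) * RserD d b (m-1) := by
  unfold PhiS RserD
  rw [Finset.mul_sum, Finset.mul_sum]
  apply Finset.sum_congr rfl
  intro N hN
  have h1 : Np d N 1 = m - 1 := (mem_Tset.mp hN).2
  have h2 : Spre d 0 N = 0 := by
    unfold Spre
    rw [Finset.Icc_eq_empty (by omega)]
    simp
  rw [show (1:ℕ) - 1 = 0 from rfl, h2, h1]
  rw [← mul_assoc, ← mul_assoc, ← pow_add, ← pow_add]
  congr 2
  omega

/-- THE key identity (★). -/
lemma UserD_rec (d b m : ℕ) (hb2 : 2 ≤ b) (hbd : b ≤ d + 1) (hm : 1 ≤ m) :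
    UserD d b m = (PowerSeries.X : PowerSeries ℚ) ^ m * UserD d (b-1) m
      + (PowerSeries.X : PowerSeries ℚ) ^ (2*m-1) * RserD d b (m-1) := by
  have h3 := UserD_key d b m hb2 hbd hm
  have htel := ES_telescope d b m hbd hm (b-1) (by omega) le_rfl
  have := PhiS_one d b m hm
  have : UserD d b m - X ^ m * UserD d (b-1) m
      = X ^ (m-1) * (PhiS d b m 1 - PhiS d b m (b-1)) + X ^ (m-1) * PhiS d b m (b-1) := by
    rw [← htel, h3]
  have h4 : UserD d b m - X ^ m * UserD d (b-1) m = X ^ (m-1) * PhiS d b m 1 := by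
    rw [this]; ring
  have h5 : UserD d b m - X ^ m * UserD d (b-1) m
      = X ^ (2*m-1) * RserD d b (m-1) := by rw [h4, PhiS_one d b m hm]
  linear_combination h5

lemma Tset_zero (d : ℕ) : Tset d 0 = {fun _ => 0} := by
  ext N
  rw [mem_Tset, Finset.mem_singleton]
  constructor
  · intro ⟨h1, h2⟩
    funext t
    have := Np_anti h1 le_rfl (j := t.val + 1) (by omega)
    rw [Np_fin, h2] at this
    omega
  · intro h
    subst h
    refine ⟨fun _ _ _ => le_rfl, ?_⟩
    unfold Np
    split <;> rfl

lemma RserD_zero (d b : ℕ) : RserD d b 0 = 1 := by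
  unfold RserD
  rw [Tset_zero, Finset.sum_singleton]
  have h1 : eBF d b (fun _ => 0) = 0 := by
    unfold eBF
    rw [Finset.sum_eq_zero (fun j _ => by unfold Np; split <;> simp),
        Finset.sum_eq_zero (fun j _ => by unfold Np; split <;> simp)]
    rfl
  have h2 : PInv d (fun _ => 0) = 1 := by
    unfold PInv
    apply Finset.prod_eq_one
    intro j hj
    have : gapF d (fun _ => 0) j = 0 := by
      unfold gapF Np
      split <;> split <;> rfl
    rw [this]
    unfold pochFin
    rw [Finset.prod_range_zero, inv_one]
  rw [h1, h2, pow_zero, one_mul]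

lemma RserD_stab (d b m : ℕ) (hb : d + 1 ≤ b) : RserD d b m = RserD d (d+1) m := by
  unfold RserD
  apply Finset.sum_congr rfl
  intro N hN
  have e1 : Icc b d = (∅ : Finset ℕ) := Finset.Icc_eq_empty (by omega)
  have e2 : Icc (d+1) d = (∅ : Finset ℕ) := Finset.Icc_eq_empty (by omega)
  have : eBF d b N = eBF d (d+1) N := by
    unfold eBF
    rw [e1, e2]
  rw [this]

lemma coeff_RserD_eq_zero (d b m n : ℕ) (h : n < m) :
    (PowerSeries.coeff n) (RserD d b m) = 0 := by
  unfold RserD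
  rw [map_sum]
  apply Finset.sum_eq_zero
  intro N hN
  have h1 : m ≤ eBF d b N := by
    have h2 : Np d N 1 = m := (mem_Tset.mp hN).2
    have h3 : m ^ 2 ≤ ∑ j ∈ Icc 1 d, Np d N j ^ 2 := by
      rcases Nat.eq_zero_or_pos m with hm | hm
      · simp [hm]
      · have hd : 0 < d := by
          by_contra hd
          have : Np d N 1 = 0 := Np_out d N 1 (by omega)
          omega
        calc m ^ 2 = Np d N 1 ^ 2 := by rw [h2]
        _ ≤ ∑ j ∈ Icc 1 d, Np d N j ^ 2 :=
            Finset.single_le_sum (f := fun j => Np d N j ^ 2)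
              (by intro j _; exact Nat.zero_le _) (by rw [Finset.mem_Icc]; omega)
    have hms : m ≤ m ^ 2 := by nlinarith [Nat.zero_le m]
    unfold eBF
    exact le_trans (le_trans hms h3) (Nat.le_add_right _ _)
  rw [PowerSeries.coeff_mul]
  apply Finset.sum_eq_zero
  intro p hp
  rw [Finset.HasAntidiagonal.mem_antidiagonal] at hp
  rw [PowerSeries.coeff_X_pow]
  rw [if_neg (by omega), zero_mul]

end QAux6
noncomputable section PAux1
open Finset

instance : Fintype LStep :=
  ⟨{LStep.NE, LStep.SE, LStep.E}, by intro x; cases x <;> simp⟩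

def peaksF (p : LPath) : Finset ℕ :=
  (Finset.range (p.steps.length + 1)).filter (fun i => IsPeak p i)

def npeaks (p : LPath) : ℕ := (peaksF p).card

lemma majorIndex_eq_sum (p : LPath) : majorIndex p = ∑ i ∈ peaksF p, i := rfl

lemma heightAt_zero (p : LPath) : heightAt p 0 = p.start := by
  simp [heightAt]

lemma heightAt_cons {s s' : ℕ} {σ : LStep} {l : List LStep}
    (h : (s' : ℤ) = (s : ℤ) + σ.delta) (i : ℕ) :
    heightAt ⟨s, σ :: l⟩ (i + 1) = heightAt ⟨s', l⟩ i := by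
  simp only [heightAt, List.take_succ_cons, List.map_cons, List.sum_cons]
  rw [h]
  ring

lemma isPeak_zero (p : LPath) : ¬ IsPeak p 0 := by
  intro h
  exact absurd h.1 (by omega)

lemma isPeak_cons_one {s : ℕ} {σ : LStep} {l : List LStep} :
    IsPeak ⟨s, σ :: l⟩ 1 ↔ (σ = LStep.NE ∧ l[0]? = some LStep.SE) := by
  unfold IsPeak
  simp

lemma isPeak_cons_succ {s s' : ℕ} {σ : LStep} {l : List LStep} {j : ℕ} (hj : 1 ≤ j) :
    IsPeak ⟨s, σ :: l⟩ (j + 1) ↔ IsPeak ⟨s', l⟩ j := by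
  unfold IsPeak
  obtain ⟨j, rfl⟩ : ∃ t, j = t + 1 := ⟨j - 1, by omega⟩
  simp

lemma peaksF_cons {s s' : ℕ} {σ : LStep} {l : List LStep} :
    peaksF ⟨s, σ :: l⟩
      = (if IsPeak ⟨s, σ :: l⟩ 1 then {1} else ∅)
        ∪ (peaksF ⟨s', l⟩).image (· + 1) := by
  ext i
  simp only [peaksF, Finset.mem_union, Finset.mem_filter, Finset.mem_range, Finset.mem_image]
  match i with
  | 0 =>
    constructor
    · intro ⟨_, h⟩
      exact absurd h (isPeak_zero _)
    · intro h
      rcases h with h | ⟨j, ⟨_, hj⟩, hj1⟩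
      · split at h <;> simp at h
      · omega
  | 1 =>
    constructor
    · intro ⟨_, h⟩
      left
      simp [h]
    · intro h
      rcases h with h | ⟨j, ⟨_, hj⟩, hj1⟩
      · split at h
        · rename_i hp
          simp only [List.length_cons]
          exact ⟨by omega, hp⟩
        · simp at h
      · have : j = 0 := by omega
        subst this
        exact absurd hj (isPeak_zero _)
  | (j + 2) =>
    constructor
    · intro ⟨h1, h2⟩
      right
      refine ⟨j + 1, ⟨?_, ?_⟩, rfl⟩
      · simp at h1 ⊢
        omega
      · exact (isPeak_cons_succ (s := s) (s' := s') (by omega)).mp h2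
    · intro h
      rcases h with h | ⟨t, ⟨ht1, ht2⟩, ht3⟩
      · split at h <;> simp at h
      · have : t = j + 1 := by omega
        subst this
        refine ⟨by simp at ht1 ⊢; omega, (isPeak_cons_succ (s := s) (s' := s') (by omega)).mpr ht2⟩

lemma one_not_mem_image (q : LPath) : 1 ∉ (peaksF q).image (· + 1) := by
  intro h
  rw [Finset.mem_image] at h
  obtain ⟨j, hj, hj1⟩ := h
  unfold peaksF at hj
  have : IsPeak q j := (Finset.mem_filter.mp hj).2
  have := this.1
  omega

lemma npeaks_cons {s s' : ℕ} {σ : LStep} {l : List LStep} :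
    npeaks ⟨s, σ :: l⟩
      = (if IsPeak ⟨s, σ :: l⟩ 1 then 1 else 0) + npeaks ⟨s', l⟩ := by
  unfold npeaks
  rw [peaksF_cons (s' := s')]
  rw [Finset.card_union_of_disjoint]
  · rw [Finset.card_image_of_injective _ (fun a b => by omega)]
    congr 1
    split <;> simp
  · split
    · rw [Finset.disjoint_singleton_left]
      exact one_not_mem_image _
    · simp

lemma majorIndex_cons {s s' : ℕ} {σ : LStep} {l : List LStep} :
    majorIndex ⟨s, σ :: l⟩
      = (if IsPeak ⟨s, σ :: l⟩ 1 then 1 else 0)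
        + majorIndex ⟨s', l⟩ + npeaks ⟨s', l⟩ := by
  rw [majorIndex_eq_sum, majorIndex_eq_sum, peaksF_cons (s' := s')]
  rw [Finset.sum_union (by
    split
    · rw [Finset.disjoint_singleton_left]
      exact one_not_mem_image _
    · simp)]
  rw [Finset.sum_image (fun a _ b _ => by omega)]
  have : ∑ j ∈ peaksF ⟨s', l⟩, (j + 1) = (∑ j ∈ peaksF ⟨s', l⟩, j) + npeaks ⟨s', l⟩ := by
    rw [Finset.sum_add_distrib, Finset.sum_const, smul_eq_mul, mul_one]
    rfl
  rw [this]
  split <;> simp <;> ring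

lemma valid_cons {s s' : ℕ} {σ : LStep} {l : List LStep}
    (h : (s' : ℤ) = (s : ℤ) + σ.delta) :
    ValidPath ⟨s, σ :: l⟩
      ↔ ((σ = LStep.E → s = 0) ∧ (l = [] → σ = LStep.SE) ∧ ValidPath ⟨s', l⟩) := by
  unfold ValidPath
  constructor
  · intro ⟨h1, h2, h3, h4⟩
    refine ⟨?_, ?_, ?_, ?_, ?_, ?_⟩
    · intro hE
      have := h2 0 (by simp [hE])
      rw [heightAt_zero] at this
      exact_mod_cast this
    · intro hl
      subst hl
      rcases h4 with h4 | h4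
      · simp at h4
      · simp [List.getLast?] at h4
        exact h4
    · intro i hi
      rw [← heightAt_cons h]
      exact h1 (i+1) (by
        change i ≤ l.length at hi
        change i + 1 ≤ (σ :: l).length
        simp only [List.length_cons]
        omega)
    · intro i hi
      rw [← heightAt_cons h]
      exact h2 (i+1) (by simpa using hi)
    · rw [← heightAt_cons h]
      simpa using h3
    · rcases h4 with h4 | h4
      · simp at h4
      · match l with
        | [] => left; rfl
        | (τ :: l') =>
          right
          rw [List.getLast?_cons_cons] at h4
          exact h4
  · intro ⟨hE, hnil, h1, h2, h3, h4⟩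
    refine ⟨?_, ?_, ?_, ?_⟩
    · intro i hi
      match i with
      | 0 =>
        rw [heightAt_zero]
        exact Int.ofNat_nonneg s
      | (i+1) =>
        rw [heightAt_cons h]
        exact h1 i (by
          change i + 1 ≤ (σ :: l).length at hi
          change i ≤ l.length
          simp only [List.length_cons] at hi
          omega)
    · intro i hi
      match i with
      | 0 =>
        change (σ :: l)[0]? = some LStep.E at hi
        simp only [List.getElem?_cons_zero] at hi
        rw [heightAt_zero]
        have : σ = LStep.E := by injection hi
        exact_mod_cast hE this
      | (i+1) =>
        rw [heightAt_cons h]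
        exact h2 i (by simpa using hi)
    · have : (⟨s, σ :: l⟩ : LPath).steps.length = l.length + 1 := by simp
      rw [this, heightAt_cons h]
      exact h3
    · right
      match l with
      | [] => simp [List.getLast?, hnil rfl]
      | (τ :: l') =>
        rw [List.getLast?_cons_cons]
        rcases h4 with h4 | h4
        · simp at h4
        · exact h4

end PAux1
noncomputable section PAux2
open Finset

lemma mem_peaksF {p : LPath} {i : ℕ} : i ∈ peaksF p ↔ IsPeak p i := by
  unfold peaksF
  rw [Finset.mem_filter, Finset.mem_range]
  constructor
  · exact fun h => h.2
  · intro h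
    refine ⟨?_, h⟩
    have h2 := h.2.2
    have : i < p.steps.length := (List.getElem?_eq_some_iff.mp h2).1
    omega

lemma npeaks_le_major (p : LPath) : npeaks p ≤ majorIndex p := by
  rw [majorIndex_eq_sum]
  unfold npeaks
  calc (peaksF p).card = ∑ _i ∈ peaksF p, 1 := by rw [Finset.sum_const, smul_eq_mul, mul_one]
  _ ≤ ∑ i ∈ peaksF p, i := Finset.sum_le_sum (fun i hi => (mem_peaksF.mp hi).1)

lemma npeaks_zero_no_peaks {p : LPath} (h : npeaks p = 0) : ∀ i, ¬ IsPeak p i := by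
  intro i hi
  unfold npeaks at h
  rw [Finset.card_eq_zero] at h
  have : i ∈ peaksF p := mem_peaksF.mpr hi
  rw [h] at this
  simp at this

lemma heightAt_one {s : ℕ} {σ : LStep} {l : List LStep} :
    heightAt ⟨s, σ :: l⟩ 1 = (s : ℤ) + σ.delta := by
  simp [heightAt, List.take_succ_cons]

lemma valid_start_pos {s : ℕ} {l : List LStep} (hv : ValidPath ⟨s, l⟩) (hs : 1 ≤ s) :
    l ≠ [] := by
  intro h
  subst h
  have := hv.2.2.1
  simp only [List.length_nil] at this
  rw [heightAt_zero] at this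
  simp at this
  omega

lemma peakless_eq_replicate : ∀ (l : List LStep) (s : ℕ), ValidPath ⟨s, l⟩ →
    (∀ i, ¬ IsPeak (⟨s, l⟩ : LPath) i) → l = List.replicate s LStep.SE := by
  intro l
  induction l with
  | nil =>
    intro s hv _
    have := hv.2.2.1
    simp only [List.length_nil] at this
    rw [heightAt_zero] at this
    have : s = 0 := by exact_mod_cast this
    simp [this]
  | cons σ l ih =>
    intro s hv hnp
    cases σ with
    | NE =>
      have hv' := (valid_cons (s' := s + 1) (by simp [LStep.delta])).mp hv
      have hq : ∀ i, ¬ IsPeak (⟨s + 1, l⟩ : LPath) i := by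
        intro i hi
        match i with
        | 0 => exact isPeak_zero _ hi
        | (j+1) =>
          exact hnp (j+2) ((isPeak_cons_succ (s := s) (s' := s+1) (by omega)).mpr hi)
      have hrep := ih (s+1) hv'.2.2 hq
      apply absurd (hnp 1)
      rw [not_not, isPeak_cons_one]
      refine ⟨rfl, ?_⟩
      rw [hrep]
      simp [List.replicate_succ]
    | SE =>
      have hs : 1 ≤ s := by
        have h1 := hv.1 1 (by simp)
        rw [heightAt_one] at h1
        simp [LStep.delta] at h1
        omega
      obtain ⟨t, rfl⟩ : ∃ t, s = t + 1 := ⟨s - 1, by omega⟩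
      have hv' := (valid_cons (s' := t) (by simp [LStep.delta])).mp hv
      have hq : ∀ i, ¬ IsPeak (⟨t, l⟩ : LPath) i := by
        intro i hi
        match i with
        | 0 => exact isPeak_zero _ hi
        | (j+1) =>
          exact hnp (j+2) ((isPeak_cons_succ (s := t+1) (s' := t) (by omega)).mpr hi)
      have hrep := ih t hv'.2.2 hq
      rw [hrep, List.replicate_succ]
    | E =>
      have hv' := (valid_cons (s' := s) (by simp [LStep.delta])).mp hv
      have hs0 : s = 0 := hv'.1 rfl
      have hq : ∀ i, ¬ IsPeak (⟨s, l⟩ : LPath) i := by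
        intro i hi
        match i with
        | 0 => exact isPeak_zero _ hi
        | (j+1) =>
          exact hnp (j+2) ((isPeak_cons_succ (s := s) (s' := s) (by omega)).mpr hi)
      have hrep := ih s hv'.2.2 hq
      rw [hs0] at hrep
      simp only [List.replicate_zero] at hrep
      have := hv'.2.1 hrep
      exact absurd this (by simp)

lemma length_le_bound : ∀ (l : List LStep) (s : ℕ), ValidPath ⟨s, l⟩ →
    l.length ≤ 2 * majorIndex ⟨s, l⟩ + s := by
  intro l
  induction l with
  | nil => simp
  | cons σ l ih =>
    intro s hv
    cases σ with
    | NE =>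
      have hv' := (valid_cons (s' := s + 1) (by simp [LStep.delta])).mp hv
      have hih := ih (s+1) hv'.2.2
      have hmaj := majorIndex_cons (s := s) (s' := s+1) (σ := LStep.NE) (l := l)
      have hkey : (if IsPeak (⟨s, LStep.NE :: l⟩ : LPath) 1 then 1 else 0)
          + npeaks ⟨s+1, l⟩ ≥ 1 := by
        by_contra hc
        push_neg at hc
        have h1 : ¬ IsPeak (⟨s, LStep.NE :: l⟩ : LPath) 1 := by
          intro h; simp [h] at hc
        have h2 : npeaks (⟨s+1, l⟩ : LPath) = 0 := by
          split at hc <;> omega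
        have hrep := peakless_eq_replicate l (s+1) hv'.2.2 (npeaks_zero_no_peaks h2)
        apply h1
        rw [isPeak_cons_one]
        refine ⟨rfl, ?_⟩
        rw [hrep]
        simp [List.replicate_succ]
      simp only [List.length_cons]
      omega
    | SE =>
      have hs : 1 ≤ s := by
        have h1 := hv.1 1 (by simp)
        rw [heightAt_one] at h1
        simp [LStep.delta] at h1
        omega
      obtain ⟨t, rfl⟩ : ∃ u, s = u + 1 := ⟨s - 1, by omega⟩
      have hv' := (valid_cons (s' := t) (by simp [LStep.delta])).mp hv
      have hih := ih t hv'.2.2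
      have hmaj := majorIndex_cons (s := t+1) (s' := t) (σ := LStep.SE) (l := l)
      have hnp : npeaks (⟨t, l⟩ : LPath) ≤ majorIndex ⟨t, l⟩ := npeaks_le_major _
      have hite : (if IsPeak (⟨t+1, LStep.SE :: l⟩ : LPath) 1 then 1 else 0) = 0 ∨
          (if IsPeak (⟨t+1, LStep.SE :: l⟩ : LPath) 1 then 1 else 0) = 1 := by
        split
        · right; rfl
        · left; rfl
      simp only [List.length_cons]
      omega
    | E =>
      have hv' := (valid_cons (s' := s) (by simp [LStep.delta])).mp hv
      have hs0 : s = 0 := hv'.1 rfl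
      have hih := ih s hv'.2.2
      have hmaj := majorIndex_cons (s := s) (s' := s) (σ := LStep.E) (l := l)
      have hpk : ¬ IsPeak (⟨s, LStep.E :: l⟩ : LPath) 1 := by
        rw [isPeak_cons_one]
        simp
      have hkey : npeaks (⟨s, l⟩ : LPath) ≥ 1 := by
        by_contra hc
        push_neg at hc
        have h2 : npeaks (⟨s, l⟩ : LPath) = 0 := by omega
        have hrep := peakless_eq_replicate l s hv'.2.2 (npeaks_zero_no_peaks h2)
        rw [hs0] at hrep
        simp only [List.replicate_zero] at hrep
        exact absurd (hv'.2.1 hrep) (by simp)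
      have hite : (if IsPeak (⟨s, LStep.E :: l⟩ : LPath) 1 then 1 else 0) = 0 :=
        if_neg hpk
      simp only [List.length_cons]
      omega

lemma finite_paths (c n : ℕ) :
    {p : LPath | ValidPath p ∧ p.start = c ∧ majorIndex p = n}.Finite := by
  apply Set.Finite.subset
    (Set.Finite.image (fun l => (⟨c, l⟩ : LPath)) (List.finite_length_le LStep (2*n + c)))
  intro p ⟨h1, h2, h3⟩
  refine ⟨p.steps, ?_, ?_⟩
  · have := length_le_bound p.steps p.start (by
      have : p = ⟨p.start, p.steps⟩ := rfl
      rw [← this]; exact h1)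
    simp only [Set.mem_setOf_eq]
    have hp : p = ⟨p.start, p.steps⟩ := rfl
    rw [← hp] at this
    omega
  · rw [← h2]

end PAux2
noncomputable section PAux3
open Finset

instance : DecidableEq LPath := Classical.decEq _

def setA (k b m n : ℕ) : Set LPath :=
  {p | ValidPath p ∧ SpecialKA k b p ∧ majorIndex p = n ∧ npeaks p = m}

def setU (k b m n : ℕ) : Set LPath :=
  {p | p ∈ setA k b m n ∧ p.steps[0]? = some LStep.NE}

def setV (k b m n : ℕ) : Set LPath :=
  {p | p ∈ setA k b m n ∧ p.steps[0]? = some LStep.SE}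

def pA (k b m n : ℕ) : ℕ := (setA k b m n).ncard
def pU (k b m n : ℕ) : ℕ := (setU k b m n).ncard
def pV (k b m n : ℕ) : ℕ := (setV k b m n).ncard

lemma setA_finite (k b m n : ℕ) : (setA k b m n).Finite := by
  apply Set.Finite.subset (finite_paths (k - b) n)
  intro p ⟨h1, h2, h3, _⟩
  exact ⟨h1, h2.1, h3⟩

lemma setU_finite (k b m n : ℕ) : (setU k b m n).Finite :=
  Set.Finite.subset (setA_finite k b m n) (fun p hp => hp.1)

lemma setV_finite (k b m n : ℕ) : (setV k b m n).Finite :=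
  Set.Finite.subset (setA_finite k b m n) (fun p hp => hp.1)

lemma pA_eq_zero_of_lt (k b m n : ℕ) (h : n < m) : pA k b m n = 0 := by
  unfold pA
  convert Set.ncard_empty LPath
  ext p
  simp only [Set.mem_empty_iff_false, iff_false]
  intro ⟨_, _, h3, h4⟩
  have := npeaks_le_major p
  omega

lemma pU_eq_zero_of_lt (k b m n : ℕ) (h : n < m) : pU k b m n = 0 := by
  unfold pU
  convert Set.ncard_empty LPath
  ext p
  simp only [Set.mem_empty_iff_false, iff_false]
  intro ⟨⟨_, _, h3, h4⟩, _⟩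
  have := npeaks_le_major p
  omega

lemma pV_eq_zero_of_lt (k b m n : ℕ) (h : n < m) : pV k b m n = 0 := by
  unfold pV
  convert Set.ncard_empty LPath
  ext p
  simp only [Set.mem_empty_iff_false, iff_false]
  intro ⟨⟨_, _, h3, h4⟩, _⟩
  have := npeaks_le_major p
  omega

lemma countE_eq_sum (k a n : ℕ) :
    countE k a n = ∑ m ∈ Finset.range (n + 1), pA k a m n := by
  unfold countE
  have hS : {p : LPath | ValidPath p ∧ SpecialKA k a p ∧ majorIndex p = n}.Finite := by
    apply Set.Finite.subset (finite_paths (k - a) n)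
    intro p ⟨h1, h2, h3⟩
    exact ⟨h1, h2.1, h3⟩
  rw [Set.ncard_eq_toFinset_card _ hS]
  have key : hS.toFinset
      = Finset.biUnion (Finset.range (n+1)) (fun m => (setA_finite k a m n).toFinset) := by
    ext p
    simp only [Set.Finite.mem_toFinset, Finset.mem_biUnion, Finset.mem_range]
    constructor
    · intro ⟨h1, h2, h3⟩
      refine ⟨npeaks p, ?_, h1, h2, h3, rfl⟩
      have := npeaks_le_major p
      omega
    · intro ⟨m, _, h1, h2, h3, _⟩
      exact ⟨h1, h2, h3⟩
  rw [show hS.toFinset.card = (Finset.biUnion (Finset.range (n+1))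
      (fun m => (setA_finite k a m n).toFinset)).card from by rw [key]]
  rw [Finset.card_biUnion]
  · apply Finset.sum_congr rfl
    intro m _
    exact (Set.ncard_eq_toFinset_card _ _).symm
  · intro m1 _ m2 _ hne
    rw [Function.onFun, Finset.disjoint_left]
    intro p hp1 hp2
    simp only [Set.Finite.mem_toFinset] at hp1 hp2
    exact hne (hp1.2.2.2 ▸ hp2.2.2.2 ▸ rfl)

lemma valid_replicate (s : ℕ) : ValidPath ⟨s, List.replicate s LStep.SE⟩ := by
  induction s with
  | zero =>
    refine ⟨?_, ?_, ?_, Or.inl rfl⟩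
    · intro i _
      simp [heightAt]
    · intro i hi
      simp only [List.replicate_zero] at hi
      cases i <;> simp at hi
    · simp [heightAt]
  | succ t ih =>
    rw [List.replicate_succ]
    rw [valid_cons (s' := t) (by simp [LStep.delta])]
    exact ⟨by simp, by simp, ih⟩

lemma heightAt_replicate (s i : ℕ) :
    heightAt ⟨s, List.replicate s LStep.SE⟩ i = (s : ℤ) - min i s := by
  unfold heightAt
  rw [List.take_replicate, List.map_replicate, List.sum_replicate]
  simp [LStep.delta]
  ring

lemma no_peaks_replicate (s : ℕ) (i : ℕ) : ¬ IsPeak (⟨s, List.replicate s LStep.SE⟩ : LPath) i := by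
  intro h
  have h2 := h.2.1
  have := List.mem_of_getElem? h2
  have := List.eq_of_mem_replicate this
  simp at this

lemma npeaks_replicate (s : ℕ) : npeaks ⟨s, List.replicate s LStep.SE⟩ = 0 := by
  unfold npeaks
  rw [Finset.card_eq_zero]
  ext i
  simp only [Finset.notMem_empty, iff_false]
  intro h
  exact no_peaks_replicate s i (mem_peaksF.mp h)

lemma major_eq_zero_of_no_peaks {p : LPath} (h : npeaks p = 0) : majorIndex p = 0 := by
  rw [majorIndex_eq_sum]
  unfold npeaks at h
  rw [Finset.card_eq_zero] at h
  rw [h]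
  rfl

lemma pA_zero (k b n : ℕ) (hb : 1 ≤ b) (hbk : b ≤ k) :
    pA k b 0 n = if n = 0 then 1 else 0 := by
  unfold pA
  split
  · rename_i hn
    subst hn
    have : setA k b 0 0 = {(⟨k - b, List.replicate (k-b) LStep.SE⟩ : LPath)} := by
      ext p
      simp only [Set.mem_singleton_iff, setA, Set.mem_setOf_eq]
      constructor
      · intro ⟨h1, h2, h3, h4⟩
        have hrep : p.steps = List.replicate p.start LStep.SE := by
          have hp : p = ⟨p.start, p.steps⟩ := rfl
          apply peakless_eq_replicate p.steps p.start (hp ▸ h1)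
          intro i
          rw [← hp]
          exact npeaks_zero_no_peaks h4 i
        have hst : p.start = k - b := h2.1
        cases p
        simp_all
      · intro h
        subst h
        refine ⟨valid_replicate _, ⟨rfl, ?_⟩, ?_, npeaks_replicate _⟩
        · intro i _
          rw [heightAt_replicate]
          have : (0:ℤ) ≤ min i (k-b) := by positivity
          push_cast
          omega
        · exact major_eq_zero_of_no_peaks (npeaks_replicate _)
    rw [this, Set.ncard_singleton]
  · rename_i hn
    convert Set.ncard_empty LPath
    ext p
    simp only [Set.mem_empty_iff_false, iff_false]
    intro ⟨_, _, h3, h4⟩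
    exact hn (h3 ▸ major_eq_zero_of_no_peaks h4)

end PAux3
noncomputable section PAux4
open Finset

lemma steps_head {p : LPath} {σ : LStep} (h : p.steps[0]? = some σ) :
    ∃ l, p.steps = σ :: l := by
  match hp : p.steps with
  | [] => rw [hp] at h; simp at h
  | (τ :: l) =>
    rw [hp] at h
    simp at h
    exact ⟨l, by rw [h]⟩

lemma injOn_consMap (s : ℕ) (σ : LStep) (c : ℕ) (S : Set LPath)
    (hS : ∀ q ∈ S, q.start = c) :
    Set.InjOn (fun q => (⟨s, σ :: q.steps⟩ : LPath)) S := by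
  intro q1 h1 q2 h2 h
  simp only [LPath.mk.injEq, List.cons.injEq] at h
  have e1 := hS q1 h1
  have e2 := hS q2 h2
  cases q1; cases q2
  simp_all

lemma start_mem_setA {k b m n : ℕ} {p : LPath} (hp : p ∈ setA k b m n) :
    p.start = k - b := hp.2.1.1

lemma nonempty_of_peaks {p : LPath} (h : 1 ≤ npeaks p) : p.steps ≠ [] := by
  intro hnil
  obtain ⟨i, hi⟩ := Finset.card_pos.mp (show 0 < (peaksF p).card from h)
  have := (mem_peaksF.mp hi).2.2
  rw [hnil] at this
  simp at this

/-- The `V` relation : SE-first paths. -/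
lemma setV_eq (k b m n : ℕ) (hb : 1 ≤ b) (hbk : b ≤ k - 1) (hmn : m ≤ n) :
    setV k b m n = (fun q => (⟨k - b, LStep.SE :: q.steps⟩ : LPath)) '' setA k (b+1) m (n-m) := by
  have hs1 : 1 ≤ k - b := by omega
  have hcast : ((k - b - 1 : ℕ) : ℤ) = ((k - b : ℕ) : ℤ) + LStep.SE.delta := by
    simp [LStep.delta]; omega
  have hsub : k - (b+1) = k - b - 1 := by omega
  ext p
  constructor
  · intro ⟨⟨hv, hsp, hmaj, hnp⟩, hfst⟩
    obtain ⟨l, hl⟩ := steps_head hfst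
    have hps : p = ⟨k - b, LStep.SE :: l⟩ := by
      have : p = ⟨p.start, p.steps⟩ := rfl
      rw [this, hsp.1, hl]
    rw [hps] at hv hsp hmaj hnp
    have hv' := (valid_cons (s' := k - b - 1) hcast).mp hv
    have hmaj' := majorIndex_cons (s := k - b) (s' := k - b - 1) (σ := LStep.SE) (l := l)
    have hnp' := npeaks_cons (s := k - b) (s' := k - b - 1) (σ := LStep.SE) (l := l)
    have hpk1 : ¬ IsPeak (⟨k - b, LStep.SE :: l⟩ : LPath) 1 := by
      rw [isPeak_cons_one]; simp
    rw [if_neg hpk1] at hmaj' hnp'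
    refine ⟨⟨k - b - 1, l⟩, ⟨hv'.2.2, ⟨by show k - b - 1 = k - (b+1); omega, ?_⟩, ?_, ?_⟩,
      hps.symm⟩
    · intro i hi
      rw [← heightAt_cons hcast]
      exact hsp.2 (i+1) (by
        change i ≤ l.length at hi
        change i + 1 ≤ (LStep.SE :: l).length
        simp only [List.length_cons]; omega)
    · show majorIndex ⟨k - b - 1, l⟩ = n - m
      omega
    · show npeaks ⟨k - b - 1, l⟩ = m
      omega
  · intro ⟨q, hq, hpq⟩
    obtain ⟨qs, ql⟩ := q
    obtain ⟨hv, hsp, hmaj, hnp⟩ := hq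
    have hqs : qs = k - b - 1 := by
      have h9 := hsp.1
      change qs = k - (b+1) at h9
      omega
    subst hqs
    rw [← hpq]
    have hv2 : ValidPath ⟨k - b, LStep.SE :: ql⟩ := by
      rw [valid_cons hcast]
      exact ⟨by simp, fun _ => rfl, hv⟩
    have hpk1 : ¬ IsPeak (⟨k - b, LStep.SE :: ql⟩ : LPath) 1 := by
      rw [isPeak_cons_one]; simp
    have hmaj' := majorIndex_cons (s := k - b) (s' := k - b - 1) (σ := LStep.SE) (l := ql)
    have hnp' := npeaks_cons (s := k - b) (s' := k - b - 1) (σ := LStep.SE) (l := ql)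
    rw [if_neg hpk1] at hmaj' hnp'
    refine ⟨⟨hv2, ⟨rfl, ?_⟩, ?_, ?_⟩, by simp⟩
    · intro i hi
      match i with
      | 0 =>
        rw [heightAt_zero]
        show ((k - b : ℕ) : ℤ) < k
        omega
      | (i+1) =>
        rw [heightAt_cons hcast]
        exact hsp.2 i (by
          change i + 1 ≤ (LStep.SE :: ql).length at hi
          change i ≤ ql.length
          simp only [List.length_cons] at hi; omega)
    · show majorIndex ⟨k - b, LStep.SE :: ql⟩ = n
      omega
    · show npeaks ⟨k - b, LStep.SE :: ql⟩ = m
      omega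

lemma pV_rec (k b m n : ℕ) (hb : 1 ≤ b) (hbk : b ≤ k - 1) (hmn : m ≤ n) :
    pV k b m n = pA k (b+1) m (n-m) := by
  unfold pV pA
  rw [setV_eq k b m n hb hbk hmn]
  exact Set.ncard_image_of_injOn (injOn_consMap _ _ (k - (b+1))
    _ (fun q hq => start_mem_setA hq))

end PAux4
noncomputable section PAux5
open Finset

lemma setU_eq (k b m n : ℕ) (hb : 2 ≤ b) (hbk : b ≤ k) (hm : 1 ≤ m) (hmn : m ≤ n) :
    setU k b m n = (fun q => (⟨k - b, LStep.NE :: q.steps⟩ : LPath)) '' setU k (b-1) m (n-m)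
      ∪ (fun q => (⟨k - b, LStep.NE :: q.steps⟩ : LPath)) '' setV k (b-1) (m-1) (n-m) := by
  have hcast : ((k - b + 1 : ℕ) : ℤ) = ((k - b : ℕ) : ℤ) + LStep.NE.delta := by
    simp [LStep.delta]
  have hsub : k - (b-1) = k - b + 1 := by omega
  ext p
  constructor
  · intro ⟨⟨hv, hsp, hmaj, hnp⟩, hfst⟩
    obtain ⟨l, hl⟩ := steps_head hfst
    have hps : p = ⟨k - b, LStep.NE :: l⟩ := by
      have : p = ⟨p.start, p.steps⟩ := rfl
      rw [this, hsp.1, hl]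
    rw [hps] at hv hsp hmaj hnp
    have hv' := (valid_cons (s' := k - b + 1) hcast).mp hv
    have hlne : l ≠ [] := fun h => by simpa using hv'.2.1 h
    obtain ⟨τ, l', rfl⟩ : ∃ τ l', l = τ :: l' := by
      match l, hlne with
      | (τ :: l'), _ => exact ⟨τ, l', rfl⟩
    have hτE : τ ≠ LStep.E := by
      intro h
      subst h
      have := hv'.2.2.2.1 0 (by simp)
      rw [heightAt_zero] at this
      simp at this
      omega
    have hmaj' := majorIndex_cons (s := k - b) (s' := k - b + 1) (σ := LStep.NE) (l := τ :: l')
    have hnp' := npeaks_cons (s := k - b) (s' := k - b + 1) (σ := LStep.NE) (l := τ :: l')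
    have hsp' : SpecialKA k (b-1) ⟨k - b + 1, τ :: l'⟩ := by
      refine ⟨by show k - b + 1 = k - (b-1); omega, ?_⟩
      intro i hi
      rw [← heightAt_cons hcast]
      exact hsp.2 (i+1) (by
        change i ≤ (τ :: l').length at hi
        change i + 1 ≤ (LStep.NE :: τ :: l').length
        simp only [List.length_cons] at hi ⊢; omega)
    cases τ with
    | NE =>
      left
      have hpk1 : ¬ IsPeak (⟨k - b, LStep.NE :: LStep.NE :: l'⟩ : LPath) 1 := by
        rw [isPeak_cons_one]
        simp
      rw [if_neg hpk1] at hmaj' hnp'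
      refine ⟨⟨k - b + 1, LStep.NE :: l'⟩,
        ⟨⟨hv'.2.2, hsp', ?_, ?_⟩, by simp⟩, hps.symm⟩
      · show majorIndex ⟨k - b + 1, LStep.NE :: l'⟩ = n - m
        omega
      · show npeaks ⟨k - b + 1, LStep.NE :: l'⟩ = m
        omega
    | SE =>
      right
      have hpk1 : IsPeak (⟨k - b, LStep.NE :: LStep.SE :: l'⟩ : LPath) 1 := by
        rw [isPeak_cons_one]
        simp
      rw [if_pos hpk1] at hmaj' hnp'
      refine ⟨⟨k - b + 1, LStep.SE :: l'⟩,
        ⟨⟨hv'.2.2, hsp', ?_, ?_⟩, by simp⟩, hps.symm⟩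
      · show majorIndex ⟨k - b + 1, LStep.SE :: l'⟩ = n - m
        omega
      · show npeaks ⟨k - b + 1, LStep.SE :: l'⟩ = m - 1
        omega
    | E => exact absurd rfl hτE
  · intro hmem
    have build : ∀ (ql : List LStep), ValidPath ⟨k - b + 1, ql⟩ →
        SpecialKA k (b-1) ⟨k - b + 1, ql⟩ → ql ≠ [] →
        (ValidPath ⟨k - b, LStep.NE :: ql⟩ ∧
          (∀ i, i ≤ (LStep.NE :: ql).length →
            heightAt ⟨k - b, LStep.NE :: ql⟩ i < (k:ℤ))) := by
      intro ql hv hsp hne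
      constructor
      · rw [valid_cons hcast]
        exact ⟨by simp, fun h => absurd h hne, hv⟩
      · intro i hi
        match i with
        | 0 =>
          rw [heightAt_zero]
          show ((k - b : ℕ) : ℤ) < k
          omega
        | (i+1) =>
          rw [heightAt_cons hcast]
          exact hsp.2 i (by
            change i + 1 ≤ (LStep.NE :: ql).length at hi
            change i ≤ ql.length
            simp only [List.length_cons] at hi; omega)
    rcases hmem with ⟨q, ⟨⟨hv, hsp, hmaj, hnp⟩, hfst⟩, hpq⟩ |
      ⟨q, ⟨⟨hv, hsp, hmaj, hnp⟩, hfst⟩, hpq⟩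
    all_goals (
      obtain ⟨qs, ql⟩ := q
      have hqs : qs = k - b + 1 := by
        have h9 := hsp.1
        change qs = k - (b-1) at h9
        omega
      subst hqs
      rw [← hpq]
      have hqlne : ql ≠ [] := fun h => by rw [h] at hfst; simp at hfst
      obtain ⟨hv2, hh2⟩ := build ql hv hsp hqlne
      have hmaj' := majorIndex_cons (s := k - b) (s' := k - b + 1) (σ := LStep.NE) (l := ql)
      have hnp' := npeaks_cons (s := k - b) (s' := k - b + 1) (σ := LStep.NE) (l := ql))
    · -- NE tail : no peak at 1
      have hpk1 : ¬ IsPeak (⟨k - b, LStep.NE :: ql⟩ : LPath) 1 := by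
        rw [isPeak_cons_one]
        change ql[0]? = _ at hfst
        rw [hfst]
        simp
      rw [if_neg hpk1] at hmaj' hnp'
      refine ⟨⟨hv2, ⟨rfl, hh2⟩, ?_, ?_⟩, by simp⟩
      · show majorIndex ⟨k - b, LStep.NE :: ql⟩ = n
        omega
      · show npeaks ⟨k - b, LStep.NE :: ql⟩ = m
        omega
    · -- SE tail : peak at 1
      have hpk1 : IsPeak (⟨k - b, LStep.NE :: ql⟩ : LPath) 1 := by
        rw [isPeak_cons_one]
        change ql[0]? = _ at hfst
        exact ⟨rfl, hfst⟩
      rw [if_pos hpk1] at hmaj' hnp'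
      refine ⟨⟨hv2, ⟨rfl, hh2⟩, ?_, ?_⟩, by simp⟩
      · show majorIndex ⟨k - b, LStep.NE :: ql⟩ = n
        omega
      · show npeaks ⟨k - b, LStep.NE :: ql⟩ = m
        omega

lemma pU_rec (k b m n : ℕ) (hb : 2 ≤ b) (hbk : b ≤ k) (hm : 1 ≤ m) (hmn : m ≤ n) :
    pU k b m n = pU k (b-1) m (n-m) + pV k (b-1) (m-1) (n-m) := by
  unfold pU
  rw [setU_eq k b m n hb hbk hm hmn]
  rw [Set.ncard_union_eq ?disj ?f1 ?f2]
  case disj =>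
    rw [Set.disjoint_left]
    rintro p ⟨q1, hq1, hpq1⟩ ⟨q2, hq2, hpq2⟩
    have h1 := hq1.2
    have h2 := hq2.2
    have : q1.steps = q2.steps := by
      have := hpq1.trans hpq2.symm
      simpa using this
    rw [this, h2] at h1
    simp at h1
  case f1 => exact Set.Finite.image _ (setU_finite _ _ _ _)
  case f2 => exact Set.Finite.image _ (setV_finite _ _ _ _)
  rw [Set.ncard_image_of_injOn (injOn_consMap _ _ (k - (b-1)) _
    (fun q hq => start_mem_setA hq.1))]
  rw [Set.ncard_image_of_injOn (injOn_consMap _ _ (k - (b-1)) _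
    (fun q hq => start_mem_setA hq.1))]
  rfl

lemma pU_one (k m n : ℕ) (hk : 1 ≤ k) : pU k 1 m n = 0 := by
  unfold pU
  convert Set.ncard_empty LPath
  ext p
  simp only [Set.mem_empty_iff_false, iff_false]
  intro ⟨⟨hv, hsp, _, _⟩, hfst⟩
  obtain ⟨l, hl⟩ := steps_head hfst
  have hps : p = ⟨k - 1, LStep.NE :: l⟩ := by
    have : p = ⟨p.start, p.steps⟩ := rfl
    rw [this, hsp.1, hl]
  have := hsp.2 1 (by rw [hps]; simp)
  rw [hps, heightAt_one] at this
  simp [LStep.delta] at this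
  omega

lemma pU_zero_peaks (k b n : ℕ) : pU k b 0 n = 0 := by
  unfold pU
  convert Set.ncard_empty LPath
  ext p
  simp only [Set.mem_empty_iff_false, iff_false]
  intro ⟨⟨hv, hsp, _, hnp⟩, hfst⟩
  have hrep : p.steps = List.replicate p.start LStep.SE := by
    have hp : p = ⟨p.start, p.steps⟩ := rfl
    apply peakless_eq_replicate p.steps p.start (hp ▸ hv)
    intro i
    rw [← hp]
    exact npeaks_zero_no_peaks hnp i
  rw [hrep] at hfst
  have := List.mem_of_getElem? hfst
  have := List.eq_of_mem_replicate this
  simp at this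

lemma setAk_eq (k m n : ℕ) (hk : 1 ≤ k) (hm : 1 ≤ m) (hmn : m ≤ n) :
    setA k k m n = (fun q => (⟨0, LStep.E :: q.steps⟩ : LPath)) '' setA k k m (n-m)
      ∪ setU k k m n := by
  have hcast : ((0 : ℕ) : ℤ) = ((0 : ℕ) : ℤ) + LStep.E.delta := by simp [LStep.delta]
  have hkk : k - k = 0 := by omega
  ext p
  constructor
  · intro hp
    obtain ⟨hv, hsp, hmaj, hnp⟩ := hp
    obtain ⟨σ, l, hl⟩ : ∃ σ l, p.steps = σ :: l := by
      have hne := nonempty_of_peaks (by omega : 1 ≤ npeaks p)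
      match p.steps, hne with
      | (σ :: l), _ => exact ⟨σ, l, rfl⟩
    have hps : p = ⟨0, σ :: l⟩ := by
      have : p = ⟨p.start, p.steps⟩ := rfl
      rw [this, hsp.1, hl, hkk]
    rw [hps] at hv hsp hmaj hnp
    cases σ with
    | SE =>
      exfalso
      have := hv.1 1 (by simp)
      rw [heightAt_one] at this
      simp [LStep.delta] at this
    | NE =>
      right
      rw [hps]
      exact ⟨⟨hv, hsp, hmaj, hnp⟩, by simp⟩
    | E =>
      left
      have hv' := (valid_cons (s' := 0) hcast).mp hv
      have hmaj' := majorIndex_cons (s := 0) (s' := 0) (σ := LStep.E) (l := l)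
      have hnp' := npeaks_cons (s := 0) (s' := 0) (σ := LStep.E) (l := l)
      have hpk1 : ¬ IsPeak (⟨0, LStep.E :: l⟩ : LPath) 1 := by
        rw [isPeak_cons_one]; simp
      rw [if_neg hpk1] at hmaj' hnp'
      refine ⟨⟨0, l⟩, ⟨hv'.2.2, ⟨by show (0:ℕ) = k - k; omega, ?_⟩, ?_, ?_⟩, hps.symm⟩
      · intro i hi
        rw [← heightAt_cons hcast]
        exact hsp.2 (i+1) (by
          change i ≤ l.length at hi
          change i + 1 ≤ (LStep.E :: l).length
          simp only [List.length_cons]; omega)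
      · show majorIndex ⟨0, l⟩ = n - m
        omega
      · show npeaks ⟨0, l⟩ = m
        omega
  · intro hmem
    rcases hmem with ⟨q, ⟨hv, hsp, hmaj, hnp⟩, hpq⟩ | hU
    · obtain ⟨qs, ql⟩ := q
      have hqs : qs = 0 := by
        have h9 := hsp.1
        change qs = k - k at h9
        omega
      subst hqs
      rw [← hpq]
      have hqlne : ql ≠ [] := nonempty_of_peaks (by
        show 1 ≤ npeaks ⟨0, ql⟩
        omega)
      have hv2 : ValidPath ⟨0, LStep.E :: ql⟩ := by
        rw [valid_cons hcast]
        exact ⟨fun _ => rfl, fun h => absurd h hqlne, hv⟩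
      have hmaj' := majorIndex_cons (s := 0) (s' := 0) (σ := LStep.E) (l := ql)
      have hnp' := npeaks_cons (s := 0) (s' := 0) (σ := LStep.E) (l := ql)
      have hpk1 : ¬ IsPeak (⟨0, LStep.E :: ql⟩ : LPath) 1 := by
        rw [isPeak_cons_one]; simp
      rw [if_neg hpk1] at hmaj' hnp'
      refine ⟨hv2, ⟨by show (0:ℕ) = k - k; omega, ?_⟩, ?_, ?_⟩
      · intro i hi
        match i with
        | 0 =>
          rw [heightAt_zero]
          show ((0:ℕ) : ℤ) < k
          simp
          omega
        | (i+1) =>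
          rw [heightAt_cons hcast]
          exact hsp.2 i (by
            change i + 1 ≤ (LStep.E :: ql).length at hi
            change i ≤ ql.length
            simp only [List.length_cons] at hi; omega)
      · show majorIndex ⟨0, LStep.E :: ql⟩ = n
        omega
      · show npeaks ⟨0, LStep.E :: ql⟩ = m
        omega
    · exact hU.1

lemma pAk_rec (k m n : ℕ) (hk : 1 ≤ k) (hm : 1 ≤ m) (hmn : m ≤ n) :
    pA k k m n = pA k k m (n-m) + pU k k m n := by
  unfold pA
  rw [setAk_eq k m n hk hm hmn]
  rw [Set.ncard_union_eq ?disj ?f1 ?f2]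
  case disj =>
    rw [Set.disjoint_left]
    rintro p ⟨q, hq, hpq⟩ hU
    have := hU.2
    rw [← hpq] at this
    simp at this
  case f1 => exact Set.Finite.image _ (setA_finite _ _ _ _)
  case f2 => exact setU_finite _ _ _ _
  rw [Set.ncard_image_of_injOn (injOn_consMap _ _ (k - k) _
    (fun q hq => start_mem_setA hq))]
  rfl

lemma pA_split (k b m n : ℕ) (hb : 1 ≤ b) (hbk : b ≤ k - 1) :
    pA k b m n = pU k b m n + pV k b m n := by
  unfold pA pU pV
  have : setA k b m n = setU k b m n ∪ setV k b m n := by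
    ext p
    constructor
    · intro hp
      obtain ⟨hv, hsp, hmaj, hnp⟩ := hp
      have hs1 : 1 ≤ k - b := by omega
      have hne : p.steps ≠ [] := by
        have hp9 : p = ⟨p.start, p.steps⟩ := rfl
        apply valid_start_pos (s := p.start) (hp9 ▸ hv)
        rw [hsp.1]
        omega
      obtain ⟨σ, l, hl⟩ : ∃ σ l, p.steps = σ :: l := by
        match p.steps, hne with
        | (σ :: l), _ => exact ⟨σ, l, rfl⟩
      cases σ with
      | NE => exact Or.inl ⟨⟨hv, hsp, hmaj, hnp⟩, by rw [hl]; simp⟩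
      | SE => exact Or.inr ⟨⟨hv, hsp, hmaj, hnp⟩, by rw [hl]; simp⟩
      | E =>
        exfalso
        have := hv.2.1 0 (by rw [hl]; simp)
        rw [heightAt_zero, hsp.1] at this
        omega
    · intro hp
      rcases hp with hp | hp <;> exact hp.1
  rw [this, Set.ncard_union_eq ?disj (setU_finite _ _ _ _) (setV_finite _ _ _ _)]
  case disj =>
    rw [Set.disjoint_left]
    rintro p h1 h2
    have e1 := h1.2
    have e2 := h2.2
    rw [e1] at e2
    simp at e2

end PAux5
noncomputable section Glue
open Finset PowerSeries

lemma coeffXpow (e n : ℕ) (f : PowerSeries ℚ) :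
    PowerSeries.coeff n ((PowerSeries.X : PowerSeries ℚ) ^ e * f)
      = if e ≤ n then PowerSeries.coeff (n - e) f else 0 := by
  split
  · rename_i h
    rw [show n = n - e + e by omega, show n - e + e - e = n - e by omega]
    exact PowerSeries.coeff_X_pow_mul f e (n - e)
  · rename_i h
    rw [PowerSeries.coeff_mul]
    apply Finset.sum_eq_zero
    intro p hp
    rw [Finset.HasAntidiagonal.mem_antidiagonal] at hp
    rw [PowerSeries.coeff_X_pow, if_neg (by omega), zero_mul]

lemma UserD_zero_m (d b : ℕ) : UserD d b 0 = 0 := by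
  unfold UserD
  rw [RserD_zero, RserD_zero]
  simp

lemma coeff_UserD_zero (d b m n : ℕ) (h : n < m) :
    PowerSeries.coeff n (UserD d b m) = 0 := by
  unfold UserD
  rw [map_sub, coeff_RserD_eq_zero _ _ _ _ h, coeffXpow, if_neg (by omega)]
  simp

/-- The main induction : path counts equal multisum coefficients. -/
lemma main_ind (k : ℕ) (hk : 1 ≤ k) : ∀ n b m, 1 ≤ b → b ≤ k →
    ((pA k b m n : ℚ) = PowerSeries.coeff n (RserD (k-1) b m)
      ∧ (pU k b m n : ℚ) = PowerSeries.coeff n (UserD (k-1) b m)) := by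
  intro n
  induction n using Nat.strong_induction_on with
  | _ n IH =>
    have hU : ∀ b m, 1 ≤ b → b ≤ k →
        (pU k b m n : ℚ) = PowerSeries.coeff n (UserD (k-1) b m) := by
      intro b
      induction b with
      | zero => intro m h1 _; omega
      | succ c ihb =>
        intro m h1 h2
        rcases Nat.eq_zero_or_pos c with hc | hc
        · subst hc
          rw [pU_one k m n hk, UserD_one]
          simp
        · -- b = c+1 ≥ 2
          rcases Nat.eq_zero_or_pos m with hm | hm
          · subst hm
            rw [pU_zero_peaks, UserD_zero_m]
            simp
          rcases lt_or_ge n m with hnm | hnm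
          · rw [pU_eq_zero_of_lt k (c+1) m n hnm, coeff_UserD_zero _ _ _ _ hnm]
            simp
          -- main case : m ≥ 1, m ≤ n
          rw [pU_rec k (c+1) m n (by omega) h2 hm hnm]
          rw [UserD_rec (k-1) (c+1) m (by omega) (by omega) hm]
          rw [map_add, coeffXpow, coeffXpow, if_pos hnm]
          rw [show (c + 1 : ℕ) - 1 = c from rfl]
          have e1 : (pU k c m (n-m) : ℚ)
              = PowerSeries.coeff (n-m) (UserD (k-1) c m) :=
            (IH (n-m) (by omega) c m hc (by omega)).2
          have e2 : (pV k c (m-1) (n-m) : ℚ)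
              = (if 2*m-1 ≤ n then
                  PowerSeries.coeff (n - (2*m-1)) (RserD (k-1) (c+1) (m-1)) else 0) := by
            rcases lt_or_ge (n-m) (m-1) with h3 | h3
            · rw [pV_eq_zero_of_lt _ _ _ _ h3, if_neg (by omega)]
              simp
            · rw [pV_rec k c (m-1) (n-m) hc (by omega) h3, if_pos (by omega)]
              rw [show n - m - (m-1) = n - (2*m-1) by omega]
              exact (IH (n - (2*m-1)) (by omega) (c+1) (m-1) (by omega) h2).1
          push_cast
          try rw [e1, e2]
          try push_cast
          try ring
    intro b m h1 h2
    refine ⟨?_, hU b m h1 h2⟩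
    -- A-claim
    rcases Nat.eq_zero_or_pos m with hm | hm
    · subst hm
      rw [pA_zero k b n h1 h2, RserD_zero]
      rw [PowerSeries.coeff_one]
      split <;> simp
    rcases lt_or_ge n m with hnm | hnm
    · rw [pA_eq_zero_of_lt k b m n hnm, coeff_RserD_eq_zero _ _ _ _ hnm]
      simp
    have hRU : PowerSeries.coeff n (RserD (k-1) b m)
        = PowerSeries.coeff n (UserD (k-1) b m)
          + if m ≤ n then PowerSeries.coeff (n-m) (RserD (k-1) (b+1) m) else 0 := by
      rw [← coeffXpow]
      unfold UserD
      rw [map_sub]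
      ring
    rcases eq_or_lt_of_le h2 with rfl | hbk
    · -- b = k
      rw [pAk_rec b m n hk hm hnm]
      have hstab : RserD (b-1) (b+1) m = RserD (b-1) b m :=
        (RserD_stab (b-1) (b+1) m (by omega)).trans (RserD_stab (b-1) b m (by omega)).symm
      rw [hRU, if_pos hnm, hstab]
      have e1 : (pA b b m (n-m) : ℚ) = PowerSeries.coeff (n-m) (RserD (b-1) b m) :=
        (IH (n-m) (by omega) b m h1 le_rfl).1
      push_cast
      rw [e1, hU b m h1 le_rfl]
      ring
    · -- b < k
      rw [pA_split k b m n h1 (by omega)]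
      rw [hRU, if_pos hnm]
      have e2 : (pV k b m n : ℚ) = PowerSeries.coeff (n-m) (RserD (k-1) (b+1) m) := by
        rw [pV_rec k b m n h1 (by omega) hnm]
        exact (IH (n-m) (by omega) (b+1) m (by omega) (by omega)).1
      push_cast
      try rw [e2, hU b m h1 h2]
      try ring

end Glue
noncomputable section Final
open Finset PowerSeries

lemma inv_prod_pochFin (s : Finset ℕ) (f : ℕ → ℕ) :
    (∏ j ∈ s, pochFin 1 1 (f j))⁻¹ = ∏ j ∈ s, (pochFin 1 1 (f j))⁻¹ := by
  induction s using Finset.induction with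
  | empty => simp
  | insert _ _ h ih =>
    rw [Finset.prod_insert h, Finset.prod_insert h, PowerSeries.mul_inv_rev, ih, mul_comm]

end Final

-- STATEMENT 4
theorem bressoud_path_gf (k a : ℕ) (ha : 1 ≤ a) (hak : a ≤ k) :
    (PowerSeries.mk fun n => (countE k a n : ℚ))
      = antitoneSum (k - 1) (fun N =>
          (PowerSeries.X : PowerSeries ℚ) ^
              (∑ j ∈ Finset.Icc 1 (k - 1), Np (k - 1) N j ^ 2
                + ∑ j ∈ Finset.Icc a (k - 1), Np (k - 1) N j)
            * (∏ j ∈ Finset.Icc 1 (k - 1),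
                pochFin 1 1 (Np (k - 1) N j - Np (k - 1) N (j + 1)))⁻¹) := by
  have hk : 1 ≤ k := le_trans ha hak
  apply PowerSeries.ext
  intro n
  rw [PowerSeries.coeff_mk]
  unfold antitoneSum
  rw [PowerSeries.coeff_mk]
  have hterm : ∀ N : Fin (k-1) → ℕ,
      (PowerSeries.X : PowerSeries ℚ) ^ (∑ j ∈ Finset.Icc 1 (k-1), Np (k-1) N j ^ 2
          + ∑ j ∈ Finset.Icc a (k-1), Np (k-1) N j)
        * (∏ j ∈ Finset.Icc 1 (k-1), pochFin 1 1 (Np (k-1) N j - Np (k-1) N (j+1)))⁻¹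
      = (PowerSeries.X : PowerSeries ℚ) ^ eBF (k-1) a N * PInv (k-1) N := by
    intro N
    rw [inv_prod_pochFin]
    rfl
  have hset : (Fintype.piFinset fun _ : Fin (k-1) => Finset.range (n + 1)).filter
        (fun N => ∀ i j : Fin (k-1), i ≤ j → N j ≤ N i)
      = (Finset.range (n+1)).biUnion (fun m => Tset (k-1) m) := by
    ext N
    simp only [Finset.mem_filter, Finset.mem_biUnion, Finset.mem_range, Fintype.mem_piFinset]
    constructor
    · intro ⟨hN, hA⟩
      refine ⟨Np (k-1) N 1, ?_, mem_Tset.mpr ⟨hA, rfl⟩⟩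
      unfold Np
      split
      · rename_i h
        exact hN ⟨1-1, h⟩
      · omega
    · intro ⟨m, hm, hNm⟩
      rw [mem_Tset] at hNm
      refine ⟨fun t => ?_, hNm.1⟩
      have h1 : Np (k-1) N (t.val + 1) ≤ Np (k-1) N 1 := Np_anti hNm.1 le_rfl (by omega)
      rw [Np_fin] at h1
      rw [hNm.2] at h1
      omega
  rw [Finset.sum_congr rfl (fun N _ => congrArg (PowerSeries.coeff n) (hterm N))]
  rw [hset, Finset.sum_biUnion (by
    intro m1 _ m2 _ hne
    simp only [Function.onFun]
    rw [Finset.disjoint_left]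
    intro N h1 h2
    rw [mem_Tset] at h1 h2
    exact hne (h1.2 ▸ h2.2 ▸ rfl))]
  have hR : ∀ m, ∑ N ∈ Tset (k-1) m,
      (PowerSeries.coeff n) ((PowerSeries.X : PowerSeries ℚ) ^ eBF (k-1) a N * PInv (k-1) N)
      = PowerSeries.coeff n (RserD (k-1) a m) := by
    intro m
    unfold RserD
    rw [map_sum]
  rw [Finset.sum_congr rfl (fun m _ => hR m)]
  rw [countE_eq_sum k a n]
  push_cast
  apply Finset.sum_congr rfl
  intro m _
  exact (main_ind k hk n a m ha hak).1
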